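/- arXiv:2602.18160 — 11 statements merged into one kernel-verified Lean document; each statement's English description precedes it below -/
import Mathlib

section
/- Let f : F → C be a classifier on a finite product input space F = X_1 × ⋯ × X_n (each X_i a finite nonempty set, C a finite nonempty set of classes) and let D be an arbitrary distribution on F. Then the global sufficient value function v^g_suff is monotone non-decreasing: for all S ⊆ S' ⊆ {1,…,n}, v^g_suff(S) ≤ v^g_suff(S'). -/
open Finset

open Classical in
/-- Conditional probability `Pr(A | B) = Pr(A ∩ B) / Pr(B)` over a finite space,
with mass function `P`. -/
noncomputable def condPr {F : Type*} [Fintype F] (P : F → ℝ) (A B : F → Prop) : ℝ :=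
  (∑ z, if A z ∧ B z then P z else 0) / (∑ z, if B z then P z else 0)

open Classical in
/-- The global sufficient value function
`v^g_suff(S) = Σ_{x : P x > 0} P x · Pr_{z∼D}(f z = f x | z_S = x_S)`. -/
noncomputable def vgSuff {n : ℕ} {X : Fin n → Type*} [∀ i, Fintype (X i)]
    {C : Type*} (f : (∀ i, X i) → C) (P : (∀ i, X i) → ℝ)
    (S : Finset (Fin n)) : ℝ :=
  ∑ x ∈ Finset.univ.filter (fun x => 0 < P x),
    P x * condPr P (fun z => f z = f x) (fun z => ∀ i ∈ S, z i = x i)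

/-!
Grouping the points `x` by the cell `(x_S, f x)`, the value becomes
`v(S) = ∑_c ∑_b Pr(f = c, z_S = b)² / Pr(z_S = b)`. Enlarging `S` to `S'` splits every cell
`{z_S = b}` into the cells `{z_S' = b'}` with `b'` restricting to `b`, and by the
Cauchy–Schwarz inequality in Sedrakyan's form `(∑ aᵢ)² / ∑ wᵢ ≤ ∑ aᵢ² / wᵢ` such a split can
only increase the sum. The argument uses only that `z_S` is a function of `z_S'`.
-/

theorem sq_sum_div_le_sum_sq_div_of_nonneg {ι : Type*} (s : Finset ι) (a w : ι → ℝ)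
    (hw : ∀ i ∈ s, 0 ≤ w i) (ha : ∀ i ∈ s, w i = 0 → a i = 0) :
    (∑ i ∈ s, a i) ^ 2 / ∑ i ∈ s, w i ≤ ∑ i ∈ s, a i ^ 2 / w i := by
  classical
  have hzero : ∀ i ∈ s, ¬ 0 < w i → a i = 0 ∧ w i = 0 := fun i hi hpos =>
    have hwi : w i = 0 := le_antisymm (not_lt.mp hpos) (hw i hi)
    ⟨ha i hi hwi, hwi⟩
  have ha' : ∑ i ∈ s with 0 < w i, a i = ∑ i ∈ s, a i :=
    sum_filter_of_ne fun i hi hne => by_contra fun hpos => hne (hzero i hi hpos).1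
  have hw' : ∑ i ∈ s with 0 < w i, w i = ∑ i ∈ s, w i :=
    sum_filter_of_ne fun i hi hne => by_contra fun hpos => hne (hzero i hi hpos).2
  calc (∑ i ∈ s, a i) ^ 2 / ∑ i ∈ s, w i
      = (∑ i ∈ s with 0 < w i, a i) ^ 2 / ∑ i ∈ s with 0 < w i, w i := by rw [ha', hw']
    _ ≤ ∑ i ∈ s with 0 < w i, a i ^ 2 / w i :=
        sq_sum_div_le_sum_sq_div _ _ fun i hi => (mem_filter.mp hi).2
    _ ≤ ∑ i ∈ s, a i ^ 2 / w i :=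
        sum_le_sum_of_subset_of_nonneg (filter_subset _ _)
          fun i hi _ => div_nonneg (sq_nonneg _) (hw i hi)

section

variable {α β β' C : Type*} [Fintype α]

open Classical in
noncomputable def fiberMass (P : α → ℝ) (g : α → β) (b : β) : ℝ :=
  ∑ x with g x = b, P x

theorem fiberMass_nonneg {P : α → ℝ} (hP : ∀ x, 0 ≤ P x) (g : α → β) (b : β) :
    0 ≤ fiberMass P g b :=
  sum_nonneg fun x _ => hP x

theorem fiberMass_mono {P Q : α → ℝ} (hQP : Q ≤ P) (g : α → β) (b : β) :
    fiberMass Q g b ≤ fiberMass P g b :=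
  sum_le_sum fun x _ => hQP x

open Classical in
theorem fiberMass_comp [Fintype β'] (P : α → ℝ) (h : β' → β) (g : α → β') (b : β) :
    fiberMass P (h ∘ g) b = ∑ b' with h b' = b, fiberMass P g b' := by
  simp only [fiberMass]
  convert (sum_fiberwise_eq_sum_filter univ {b' | h b' = b} g P).symm using 1
  simp

theorem sum_mul_comp_eq_sum_fiberMass [Fintype β] (P : α → ℝ) (g : α → β) (φ : β → ℝ) :
    ∑ x, P x * φ (g x) = ∑ b, fiberMass P g b * φ b := by
  classical
  rw [← sum_fiberwise univ g]
  refine sum_congr rfl fun b _ => ?_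
  rw [fiberMass, sum_mul]
  exact sum_congr (by congr) fun x hx => by rw [(mem_filter.mp hx).2]

theorem sum_sq_fiberMass_div_comp_le [Fintype β] [Fintype β'] {P Q : α → ℝ}
    (hQ : ∀ x, 0 ≤ Q x) (hQP : Q ≤ P) (h : β' → β) (g : α → β') :
    ∑ b, fiberMass Q (h ∘ g) b ^ 2 / fiberMass P (h ∘ g) b
      ≤ ∑ b', fiberMass Q g b' ^ 2 / fiberMass P g b' := by
  classical
  rw [← sum_fiberwise univ h (fun b' => fiberMass Q g b' ^ 2 / fiberMass P g b')]
  refine sum_le_sum fun b _ => ?_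
  rw [fiberMass_comp, fiberMass_comp]
  refine sq_sum_div_le_sum_sq_div_of_nonneg _ _ _
    (fun b' _ => fiberMass_nonneg (fun x => (hQ x).trans (hQP x)) g b') fun b' _ hb' => ?_
  exact le_antisymm (hb' ▸ fiberMass_mono hQP g b') (fiberMass_nonneg hQ g b')

open Classical in
noncomputable def sufficientValue (P : α → ℝ) (f : α → C) (g : α → β) : ℝ :=
  ∑ x with 0 < P x, P x * condPr P (fun z => f z = f x) (fun z => g z = g x)

-- `fiberMass ((f ⁻¹' {c}).indicator P) g b` is the joint mass `Pr(f = c, g = b)`.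
theorem condPr_eq_fiberMass_div (P : α → ℝ) (f : α → C) (g : α → β) (x : α) :
    condPr P (fun z => f z = f x) (fun z => g z = g x)
      = fiberMass ((f ⁻¹' {f x}).indicator P) g (g x) / fiberMass P g (g x) := by
  rw [condPr, fiberMass, fiberMass, sum_filter, sum_filter]
  congr 1
  refine sum_congr rfl fun z _ => ?_
  by_cases hf : f z = f x <;> by_cases hg : g z = g x <;> simp [hf, hg]

theorem sufficientValue_eq_sum_sq_div [Fintype β] [Fintype C] {P : α → ℝ}
    (hP : ∀ x, 0 ≤ P x) (f : α → C) (g : α → β) :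
    sufficientValue P f g
      = ∑ c, ∑ b, fiberMass ((f ⁻¹' {c}).indicator P) g b ^ 2 / fiberMass P g b := by
  set φ : C → β → ℝ := fun c b => fiberMass ((f ⁻¹' {c}).indicator P) g b / fiberMass P g b
  have drop_null : sufficientValue P f g = ∑ x, P x * φ (f x) (g x) := by
    refine (sum_filter_of_ne fun x _ hx => ?_).trans (sum_congr rfl fun x _ => ?_)
    · exact lt_of_le_of_ne (hP x) (Ne.symm (left_ne_zero_of_mul hx))
    · rw [condPr_eq_fiberMass_div]
  have split_by_class : ∑ x, P x * φ (f x) (g x)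
      = ∑ c, ∑ x, (f ⁻¹' {c}).indicator P x * φ c (g x) := by
    rw [sum_comm]
    refine sum_congr rfl fun x _ => ?_
    rw [sum_eq_single (f x) (fun c _ hc => ?_) (by simp)]
    · simp
    · rw [Set.indicator_of_notMem (s := f ⁻¹' {c}) (Ne.symm hc), zero_mul]
  rw [drop_null, split_by_class]
  refine sum_congr rfl fun c _ => ?_
  rw [sum_mul_comp_eq_sum_fiberMass]
  exact sum_congr rfl fun b _ => by rw [sq, mul_div_assoc]

theorem sufficientValue_comp_le [Fintype β] [Fintype β'] [Fintype C] {P : α → ℝ}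
    (hP : ∀ x, 0 ≤ P x) (f : α → C) (h : β' → β) (g : α → β') :
    sufficientValue P f (h ∘ g) ≤ sufficientValue P f g := by
  rw [sufficientValue_eq_sum_sq_div hP, sufficientValue_eq_sum_sq_div hP]
  exact sum_le_sum fun c _ => sum_sq_fiberMass_div_comp_le
    (Set.indicator_nonneg fun x _ => hP x) (Set.indicator_le_self' fun x _ => hP x) h g

end

theorem vgSuff_eq_sufficientValue_restrict {n : ℕ} {X : Fin n → Type*} [∀ i, Fintype (X i)]
    {C : Type*} (f : (∀ i, X i) → C) (P : (∀ i, X i) → ℝ) (S : Finset (Fin n)) :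
    vgSuff f P S = sufficientValue P f S.restrict := by
  unfold vgSuff sufficientValue
  refine sum_congr rfl fun x _ => ?_
  simp only [funext_iff, Subtype.forall, Finset.restrict]

theorem vgSuff_monotone_general {n : ℕ} {X : Fin n → Type*} [∀ i, Fintype (X i)]
    {C : Type*} [Fintype C]
    (f : (∀ i, X i) → C) (P : (∀ i, X i) → ℝ)
    (hP0 : ∀ x, 0 ≤ P x)
    (S S' : Finset (Fin n)) (hSS' : S ⊆ S') :
    vgSuff f P S ≤ vgSuff f P S' := by
  rw [vgSuff_eq_sufficientValue_restrict, vgSuff_eq_sufficientValue_restrict,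
    ← restrict₂_comp_restrict hSS']
  exact sufficientValue_comp_le hP0 f _ _

/-- for any classifier on a finite product input space and any
distribution, the global sufficient value function is monotone non-decreasing. -/
theorem vgSuff_monotone {n : ℕ} {X : Fin n → Type*} [∀ i, Fintype (X i)]
    [∀ i, Nonempty (X i)] {C : Type*} [Fintype C] [Nonempty C]
    (f : (∀ i, X i) → C) (P : (∀ i, X i) → ℝ)
    (hP0 : ∀ x, 0 ≤ P x) (hP1 : ∑ x, P x = 1)
    (S S' : Finset (Fin n)) (hSS' : S ⊆ S') :
    vgSuff f P S ≤ vgSuff f P S' :=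
  vgSuff_monotone_general f P hP0 S S' hSS'
end

section
/- Let f : F → C be a classifier on a finite product input space F = X_1 × ⋯ × X_n and let D be an arbitrary distribution on F. Then for every S ⊆ {1,…,n}, the global sufficient value function admits the representation v^g_suff(S) = Σ_{a} Pr(z_S = a) · Σ_{j ∈ C} ( Pr_{z∼D}( f(z) = j | z_S = a ) )², where the outer sum ranges over all tuples a ∈ Π_{i∈S} X_i of values for the coordinates in S with Pr(z_S = a) > 0. -/
open Finset

open Classical in
/-- `Pr(z_S = a)`, the probability that the coordinates in `S` take the values
prescribed by the tuple `a : Π_{i ∈ S} X_i`. -/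
noncomputable def prOn {n : ℕ} {X : Fin n → Type*} [∀ i, Fintype (X i)]
    (P : (∀ i, X i) → ℝ) (S : Finset (Fin n)) (a : ∀ i : S, X i) : ℝ :=
  ∑ z : ∀ i, X i, if (∀ i : S, z i = a i) then P z else 0

open Classical in
/-- the global sufficient value function admits the representation
`v^g_suff(S) = Σ_a Pr(z_S = a) · Σ_{j ∈ C} (Pr_{z∼D}(f z = j | z_S = a))²`,
the outer sum ranging over tuples `a ∈ Π_{i∈S} X_i` with `Pr(z_S = a) > 0`. -/
theorem vgSuff_repr {n : ℕ} {X : Fin n → Type*} [∀ i, Fintype (X i)]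
    [∀ i, Nonempty (X i)] {C : Type*} [Fintype C] [Nonempty C]
    (f : (∀ i, X i) → C) (P : (∀ i, X i) → ℝ)
    (hP0 : ∀ x, 0 ≤ P x) (hP1 : ∑ x, P x = 1)
    (S : Finset (Fin n)) :
    vgSuff f P S =
      ∑ a ∈ Finset.univ.filter (fun a : ∀ i : S, X i => 0 < prOn P S a),
        prOn P S a *
          ∑ j : C, (condPr P (fun z => f z = j) (fun z => ∀ i : S, z i = a i)) ^ 2 := by
  classical
  let A := ∀ i : S, X i
  let r : (∀ i, X i) → A := fun x i => x i
  let M : A → ℝ := fun a => prOn P S a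
  let N : A → C → ℝ := fun a j => ∑ z, if f z = j ∧ (∀ i : S, z i = a i) then P z else 0
  have hMnn : ∀ a, 0 ≤ M a := fun a =>
    Finset.sum_nonneg fun z _ => by split; exacts [hP0 z, le_refl 0]
  have hcond : ∀ (a : A) j,
      condPr P (fun z => f z = j) (fun z => ∀ i : S, z i = a i) = N a j / M a := by
    intro a j
    simp only [condPr, N, M, prOn]
    congr 1 <;> refine Finset.sum_congr rfl fun z _ => ?_
    · by_cases h1 : f z = j <;> by_cases h2 : (∀ i : S, z i = a i) <;> simp [h1, h2]
    · by_cases h2 : (∀ i : S, z i = a i) <;> simp [h2]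
  have hNM : ∀ (a : A) j, N a j ≤ M a := by
    intro a j
    refine Finset.sum_le_sum fun z _ => ?_
    by_cases h2 : ∀ i : S, z i = a i
    · rw [if_pos h2]
      split_ifs with h1
      · exact le_refl _
      · exact hP0 z
    · rw [if_neg h2, if_neg (fun h => h2 h.2)]
  have hterm : ∀ x : ∀ i, X i,
      condPr P (fun z => f z = f x) (fun z => ∀ i ∈ S, z i = x i)
        = N (r x) (f x) / M (r x) := by
    intro x
    rw [← hcond (r x) (f x)]
    unfold condPr
    congr 1
    · refine Finset.sum_congr rfl fun z _ => ?_
      have h : ((f z = f x) ∧ ∀ i ∈ S, z i = x i) ↔ ((f z = f x) ∧ ∀ i : S, z i = r x i) := by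
        constructor
        · rintro ⟨h1, h2⟩; exact ⟨h1, fun i => h2 i i.2⟩
        · rintro ⟨h1, h2⟩; exact ⟨h1, fun i hi => h2 ⟨i, hi⟩⟩
      split_ifs with h1 h2 h3
      · rfl
      · exact absurd (h.mp h1) h2
      · exact absurd (h.mpr h3) h1
      · rfl
    · refine Finset.sum_congr rfl fun z _ => ?_
      have h : (∀ i ∈ S, z i = x i) ↔ (∀ i : S, z i = r x i) :=
        ⟨fun h i => h i i.2, fun h i hi => h ⟨i, hi⟩⟩
      split_ifs with h1 h2 h3
      · rfl
      · exact absurd (h.mp h1) h2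
      · exact absurd (h.mpr h3) h1
      · rfl
  have lhs1 : vgSuff f P S = ∑ x, P x * (N (r x) (f x) / M (r x)) := by
    rw [vgSuff]
    rw [Finset.sum_subset (Finset.filter_subset _ _)]
    · exact Finset.sum_congr rfl fun x _ => by rw [hterm]
    · intro x _ hx
      simp only [Finset.mem_filter, Finset.mem_univ, true_and, not_lt] at hx
      have : P x = 0 := le_antisymm hx (hP0 x)
      simp [this]
  rw [lhs1, ← Finset.sum_fiberwise Finset.univ r (fun x => P x * (N (r x) (f x) / M (r x)))]
  rw [Finset.sum_filter]
  refine Finset.sum_congr rfl fun a _ => ?_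
  have hmem : ∀ x : ∀ i, X i, r x = a ↔ ∀ i : S, x i = a i := by
    intro x; constructor
    · intro h i; rw [← h]
    · intro h; funext i; exact h i
  have hinner : (∑ x ∈ Finset.univ.filter (fun x => r x = a),
      P x * (N (r x) (f x) / M (r x))) = ∑ j : C, N a j * (N a j / M a) := by
    rw [← Finset.sum_fiberwise (Finset.univ.filter (fun x => r x = a)) f
      (fun x => P x * (N (r x) (f x) / M (r x)))]
    refine Finset.sum_congr rfl fun j _ => ?_
    rw [Finset.filter_filter]
    have hsum : (∑ x ∈ Finset.univ.filter (fun x => r x = a ∧ f x = j), P x) = N a j := by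
      rw [Finset.sum_filter]
      refine Finset.sum_congr rfl fun x _ => ?_
      by_cases h1 : r x = a ∧ f x = j
      · rw [if_pos h1, if_pos ⟨h1.2, (hmem x).mp h1.1⟩]
      · rw [if_neg h1, if_neg]
        rintro ⟨hfx, hxa⟩
        exact h1 ⟨(hmem x).mpr hxa, hfx⟩
    rw [← hsum, Finset.sum_mul]
    refine Finset.sum_congr rfl fun x hx => ?_
    simp only [Finset.mem_filter] at hx
    simp only [hx.2.1, hx.2.2, hsum]
  rw [hinner]
  have hNj : ∀ j, (condPr P (fun z => f z = j) (fun z => ∀ i : S, z i = a i)) ^ 2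
      = (N a j / M a) ^ 2 := fun j => by rw [hcond]
  simp only [hNj]
  by_cases hM : 0 < prOn P S a
  · rw [if_pos hM, Finset.mul_sum]
    refine Finset.sum_congr rfl fun j _ => ?_
    have hM' : M a ≠ 0 := ne_of_gt hM
    field_simp
    ring
  · rw [if_neg hM]
    have hM0 : M a = 0 := le_antisymm (not_lt.mp hM) (hMnn a)
    have hN0 : ∀ j, N a j = 0 := fun j => le_antisymm (hM0 ▸ hNM a j)
      (Finset.sum_nonneg fun z _ => by split; exacts [hP0 z, le_refl 0])
    simp [hN0]
end

section
/- Let f : F → {0,1} be a Boolean classifier on a finite product input space F = X_1 × ⋯ × X_n, let D be an arbitrary distribution on F, let S ⊆ {1,…,n}, and let t ∉ S be a coordinate with X_t = {0,1}. Then v^g_suff(S ∪ {t}) − v^g_suff(S) = Σ_{a} 2 · Pr(z_S = a) · P₁(a) · P₀(a) · ( g₁(a) − g₀(a) )² ≥ 0, where the sum ranges over tuples a of values for S with Pr(z_S = a) > 0, P_b(a) = Pr(z_t = b | z_S = a), g_b(a) = Pr_{z∼D}(f(z) = 1 | z_S = a, z_t = b), and summands for which P₁(a)·P₀(a) = 0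 are taken to be 0. -/
open Finset

open Classical in
noncomputable def sIf {F : Type*} [Fintype F] (P : F → ℝ) (p : F → Prop) : ℝ :=
  ∑ z, if p z then P z else 0

open Classical in
lemma condPr_eq {F : Type*} [Fintype F] (P : F → ℝ) (A B : F → Prop) :
    condPr P A B = sIf P (fun z => A z ∧ B z) / sIf P B := by
  unfold condPr sIf
  congr 1
  apply Finset.sum_congr rfl
  intro z _
  congr

open Classical in
lemma prOn_eq {n : ℕ} {X : Fin n → Type*} [∀ i, Fintype (X i)]
    (P : (∀ i, X i) → ℝ) (S : Finset (Fin n)) (a : ∀ i : S, X i) :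
    prOn P S a = sIf P (fun z => ∀ i : S, z i = a i) := by
  unfold prOn sIf
  apply Finset.sum_congr rfl
  intro z _
  congr

open Classical in
lemma fiber {n : ℕ} {X : Fin n → Type*} [∀ i, Fintype (X i)]
    (S : Finset (Fin n)) (g : (∀ i, X i) → ℝ) :
    ∑ x, g x = ∑ a : ∀ i : S, X i, ∑ x, if (∀ i : S, x i = a i) then g x else 0 := by
  rw [Finset.sum_comm]
  apply Finset.sum_congr rfl
  intro x _
  rw [Finset.sum_eq_single_of_mem (fun i : S => x ↑i) (Finset.mem_univ _)]
  · rw [if_pos (fun i => rfl)]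
  · intro b _ hb
    rw [if_neg]
    intro hc
    exact hb (funext fun i => (hc i).symm)

open Classical in
lemma sIf_congr {F : Type*} [Fintype F] (P : F → ℝ) {p q : F → Prop}
    (h : ∀ z, p z ↔ q z) : sIf P p = sIf P q := by
  unfold sIf; exact Finset.sum_congr rfl (fun z _ => by rw [if_congr (h z) rfl rfl])

open Classical in
lemma sIf_def {F : Type*} [Fintype F] (P : F → ℝ) (p : F → Prop) [DecidablePred p] :
    (∑ z, if p z then P z else 0) = sIf P p := by
  unfold sIf
  apply Finset.sum_congr rfl
  intro z _
  congr

open Classical in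
lemma vg_rw {n : ℕ} {X : Fin n → Type*} [∀ i, Fintype (X i)]
    (f : (∀ i, X i) → Bool) (P : (∀ i, X i) → ℝ) (hP0 : ∀ x, 0 ≤ P x)
    (S : Finset (Fin n)) :
    vgSuff f P S = ∑ a : ∀ i : S, X i,
      (sIf P (fun z => (∀ i : S, z i = a i) ∧ f z = true)
         * (sIf P (fun z => (∀ i : S, z i = a i) ∧ f z = true)
             / sIf P (fun z => ∀ i : S, z i = a i))
       + sIf P (fun z => (∀ i : S, z i = a i) ∧ f z = false)
         * (sIf P (fun z => (∀ i : S, z i = a i) ∧ f z = false)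
             / sIf P (fun z => ∀ i : S, z i = a i))) := by
  unfold vgSuff
  rw [Finset.sum_filter_of_ne (fun x _ hne => by
    by_contra hlt
    exact hne (by rw [le_antisymm (not_lt.1 hlt) (hP0 x)]; ring))]
  rw [fiber S (fun x => P x * condPr P (fun z => f z = f x) (fun z => ∀ i ∈ S, z i = x i))]
  apply Finset.sum_congr rfl
  intro a _
  have term : ∀ x : ∀ i, X i,
      (if (∀ i : S, x i = a i)
        then P x * condPr P (fun z => f z = f x) (fun z => ∀ i ∈ S, z i = x i) else 0)
      = (if (∀ i : S, x i = a i) ∧ f x = true then P x else 0)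
          * (sIf P (fun z => (∀ i : S, z i = a i) ∧ f z = true)
             / sIf P (fun z => ∀ i : S, z i = a i))
        + (if (∀ i : S, x i = a i) ∧ f x = false then P x else 0)
          * (sIf P (fun z => (∀ i : S, z i = a i) ∧ f z = false)
             / sIf P (fun z => ∀ i : S, z i = a i)) := by
    intro x
    by_cases hx : ∀ i : S, x ↑i = a i
    · have hB : ∀ z : ∀ i, X i, (∀ i ∈ S, z i = x i) ↔ (∀ i : S, z ↑i = a i) := by
        intro z
        constructor
        · intro h i; exact (h i i.2).trans (hx i)
        · intro h i hi; exact (h ⟨i, hi⟩).trans (hx ⟨i, hi⟩).symm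
      rcases Bool.dichotomy (f x) with hfx | hfx
      · rw [if_pos hx, if_neg (by simp [hfx]), if_pos ⟨hx, hfx⟩]
        have hc : condPr P (fun z => f z = f x) (fun z => ∀ i ∈ S, z i = x i)
            = sIf P (fun z => (∀ i : S, z i = a i) ∧ f z = false)
              / sIf P (fun z => ∀ i : S, z i = a i) := by
          rw [condPr_eq]
          congr 1
          · exact sIf_congr P (fun z => by rw [hfx, hB z]; exact and_comm)
          · exact sIf_congr P hB
        rw [hc]; ring
      · rw [if_pos hx, if_pos ⟨hx, hfx⟩, if_neg (by simp [hfx])]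
        have hc : condPr P (fun z => f z = f x) (fun z => ∀ i ∈ S, z i = x i)
            = sIf P (fun z => (∀ i : S, z i = a i) ∧ f z = true)
              / sIf P (fun z => ∀ i : S, z i = a i) := by
          rw [condPr_eq]
          congr 1
          · exact sIf_congr P (fun z => by rw [hfx, hB z]; exact and_comm)
          · exact sIf_congr P hB
        rw [hc]; ring
    · rw [if_neg hx, if_neg (by tauto), if_neg (by tauto)]; ring
  rw [Finset.sum_congr rfl (fun x _ => term x), Finset.sum_add_distrib,
    ← Finset.sum_mul, ← Finset.sum_mul, sIf_def, sIf_def]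

open Classical in
lemma vg_rw_insert {n : ℕ} {X : Fin n → Type*} [∀ i, Fintype (X i)]
    (f : (∀ i, X i) → Bool) (P : (∀ i, X i) → ℝ) (hP0 : ∀ x, 0 ≤ P x)
    (S : Finset (Fin n)) (t : Fin n)
    (b₀ b₁ : X t) (hne : b₀ ≠ b₁) (hcover : ∀ v : X t, v = b₀ ∨ v = b₁) :
    vgSuff f P (insert t S) = ∑ a : ∀ i : S, X i,
      (sIf P (fun z => (∀ i : S, z i = a i) ∧ z t = b₁ ∧ f z = true)
         * (sIf P (fun z => (∀ i : S, z i = a i) ∧ z t = b₁ ∧ f z = true)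
             / sIf P (fun z => (∀ i : S, z i = a i) ∧ z t = b₁))
       + sIf P (fun z => (∀ i : S, z i = a i) ∧ z t = b₁ ∧ f z = false)
         * (sIf P (fun z => (∀ i : S, z i = a i) ∧ z t = b₁ ∧ f z = false)
             / sIf P (fun z => (∀ i : S, z i = a i) ∧ z t = b₁))
       + sIf P (fun z => (∀ i : S, z i = a i) ∧ z t = b₀ ∧ f z = true)
         * (sIf P (fun z => (∀ i : S, z i = a i) ∧ z t = b₀ ∧ f z = true)
             / sIf P (fun z => (∀ i : S, z i = a i) ∧ z t = b₀))
       + sIf P (fun z => (∀ i : S, z i = a i) ∧ z t = b₀ ∧ f z = false)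
         * (sIf P (fun z => (∀ i : S, z i = a i) ∧ z t = b₀ ∧ f z = false)
             / sIf P (fun z => (∀ i : S, z i = a i) ∧ z t = b₀))) := by
  unfold vgSuff
  rw [Finset.sum_filter_of_ne (fun x _ hne => by
    by_contra hlt
    exact hne (by rw [le_antisymm (not_lt.1 hlt) (hP0 x)]; ring))]
  rw [fiber S (fun x => P x * condPr P (fun z => f z = f x)
    (fun z => ∀ i ∈ insert t S, z i = x i))]
  apply Finset.sum_congr rfl
  intro a _
  have term : ∀ x : ∀ i, X i,
      (if (∀ i : S, x i = a i)
        then P x * condPr P (fun z => f z = f x) (fun z => ∀ i ∈ insert t S, z i = x i) else 0)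
      = (if (∀ i : S, x i = a i) ∧ x t = b₁ ∧ f x = true then P x else 0)
          * (sIf P (fun z => (∀ i : S, z i = a i) ∧ z t = b₁ ∧ f z = true)
             / sIf P (fun z => (∀ i : S, z i = a i) ∧ z t = b₁))
        + (if (∀ i : S, x i = a i) ∧ x t = b₁ ∧ f x = false then P x else 0)
          * (sIf P (fun z => (∀ i : S, z i = a i) ∧ z t = b₁ ∧ f z = false)
             / sIf P (fun z => (∀ i : S, z i = a i) ∧ z t = b₁))
        + (if (∀ i : S, x i = a i) ∧ x t = b₀ ∧ f x = true then P x else 0)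
          * (sIf P (fun z => (∀ i : S, z i = a i) ∧ z t = b₀ ∧ f z = true)
             / sIf P (fun z => (∀ i : S, z i = a i) ∧ z t = b₀))
        + (if (∀ i : S, x i = a i) ∧ x t = b₀ ∧ f x = false then P x else 0)
          * (sIf P (fun z => (∀ i : S, z i = a i) ∧ z t = b₀ ∧ f z = false)
             / sIf P (fun z => (∀ i : S, z i = a i) ∧ z t = b₀)) := by
    intro x
    by_cases hx : ∀ i : S, x ↑i = a i
    · rcases hcover (x t) with hxt | hxt <;> rcases Bool.dichotomy (f x) with hfx | hfx
      · -- x t = b₀, f x = false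
        have hB : ∀ z : ∀ i, X i,
            (∀ i ∈ insert t S, z i = x i) ↔ ((∀ i : S, z ↑i = a i) ∧ z t = b₀) := by
          intro z
          rw [Finset.forall_mem_insert]
          constructor
          · rintro ⟨h1, h2⟩
            exact ⟨fun i => (h2 i i.2).trans (hx i), h1.trans hxt⟩
          · rintro ⟨h1, h2⟩
            exact ⟨h2.trans hxt.symm, fun i hi => (h1 ⟨i, hi⟩).trans (hx ⟨i, hi⟩).symm⟩
        rw [if_pos hx, if_neg (fun h => hne (hxt.symm.trans h.2.1)), if_neg (fun h => hne (hxt.symm.trans h.2.1)),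
          if_neg (by simp [hfx]), if_pos ⟨hx, hxt, hfx⟩]
        have hc : condPr P (fun z => f z = f x) (fun z => ∀ i ∈ insert t S, z i = x i)
            = sIf P (fun z => (∀ i : S, z i = a i) ∧ z t = b₀ ∧ f z = false)
              / sIf P (fun z => (∀ i : S, z i = a i) ∧ z t = b₀) := by
          rw [condPr_eq]
          congr 1
          · exact sIf_congr P (fun z => by rw [hfx, hB z]; tauto)
          · exact sIf_congr P hB
        rw [hc]; ring
      · -- x t = b₀, f x = true
        have hB : ∀ z : ∀ i, X i,
            (∀ i ∈ insert t S, z i = x i) ↔ ((∀ i : S, z ↑i = a i) ∧ z t = b₀) := by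
          intro z
          rw [Finset.forall_mem_insert]
          constructor
          · rintro ⟨h1, h2⟩
            exact ⟨fun i => (h2 i i.2).trans (hx i), h1.trans hxt⟩
          · rintro ⟨h1, h2⟩
            exact ⟨h2.trans hxt.symm, fun i hi => (h1 ⟨i, hi⟩).trans (hx ⟨i, hi⟩).symm⟩
        rw [if_pos hx, if_neg (fun h => hne (hxt.symm.trans h.2.1)), if_neg (fun h => hne (hxt.symm.trans h.2.1)),
          if_pos ⟨hx, hxt, hfx⟩, if_neg (by simp [hfx])]
        have hc : condPr P (fun z => f z = f x) (fun z => ∀ i ∈ insert t S, z i = x i)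
            = sIf P (fun z => (∀ i : S, z i = a i) ∧ z t = b₀ ∧ f z = true)
              / sIf P (fun z => (∀ i : S, z i = a i) ∧ z t = b₀) := by
          rw [condPr_eq]
          congr 1
          · exact sIf_congr P (fun z => by rw [hfx, hB z]; tauto)
          · exact sIf_congr P hB
        rw [hc]; ring
      · -- x t = b₁, f x = false
        have hB : ∀ z : ∀ i, X i,
            (∀ i ∈ insert t S, z i = x i) ↔ ((∀ i : S, z ↑i = a i) ∧ z t = b₁) := by
          intro z
          rw [Finset.forall_mem_insert]
          constructor
          · rintro ⟨h1, h2⟩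
            exact ⟨fun i => (h2 i i.2).trans (hx i), h1.trans hxt⟩
          · rintro ⟨h1, h2⟩
            exact ⟨h2.trans hxt.symm, fun i hi => (h1 ⟨i, hi⟩).trans (hx ⟨i, hi⟩).symm⟩
        rw [if_pos hx, if_neg (by simp [hfx]), if_pos ⟨hx, hxt, hfx⟩,
          if_neg (fun h => hne (h.2.1.symm.trans hxt)), if_neg (fun h => hne (h.2.1.symm.trans hxt))]
        have hc : condPr P (fun z => f z = f x) (fun z => ∀ i ∈ insert t S, z i = x i)
            = sIf P (fun z => (∀ i : S, z i = a i) ∧ z t = b₁ ∧ f z = false)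
              / sIf P (fun z => (∀ i : S, z i = a i) ∧ z t = b₁) := by
          rw [condPr_eq]
          congr 1
          · exact sIf_congr P (fun z => by rw [hfx, hB z]; tauto)
          · exact sIf_congr P hB
        rw [hc]; ring
      · -- x t = b₁, f x = true
        have hB : ∀ z : ∀ i, X i,
            (∀ i ∈ insert t S, z i = x i) ↔ ((∀ i : S, z ↑i = a i) ∧ z t = b₁) := by
          intro z
          rw [Finset.forall_mem_insert]
          constructor
          · rintro ⟨h1, h2⟩
            exact ⟨fun i => (h2 i i.2).trans (hx i), h1.trans hxt⟩
          · rintro ⟨h1, h2⟩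
            exact ⟨h2.trans hxt.symm, fun i hi => (h1 ⟨i, hi⟩).trans (hx ⟨i, hi⟩).symm⟩
        rw [if_pos hx, if_pos ⟨hx, hxt, hfx⟩, if_neg (by simp [hfx]),
          if_neg (fun h => hne (h.2.1.symm.trans hxt)), if_neg (fun h => hne (h.2.1.symm.trans hxt))]
        have hc : condPr P (fun z => f z = f x) (fun z => ∀ i ∈ insert t S, z i = x i)
            = sIf P (fun z => (∀ i : S, z i = a i) ∧ z t = b₁ ∧ f z = true)
              / sIf P (fun z => (∀ i : S, z i = a i) ∧ z t = b₁) := by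
          rw [condPr_eq]
          congr 1
          · exact sIf_congr P (fun z => by rw [hfx, hB z]; tauto)
          · exact sIf_congr P hB
        rw [hc]; ring
    · rw [if_neg hx, if_neg (by tauto), if_neg (by tauto), if_neg (by tauto),
        if_neg (by tauto)]; ring
  rw [Finset.sum_congr rfl (fun x _ => term x), Finset.sum_add_distrib,
    Finset.sum_add_distrib, Finset.sum_add_distrib,
    ← Finset.sum_mul, ← Finset.sum_mul, ← Finset.sum_mul, ← Finset.sum_mul,
    sIf_def, sIf_def, sIf_def, sIf_def]

lemma sIf_nonneg {F : Type*} [Fintype F] {P : F → ℝ} (hP0 : ∀ x, 0 ≤ P x) (p : F → Prop) :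
    0 ≤ sIf P p := by
  unfold sIf; exact Finset.sum_nonneg (fun z _ => by split <;> simp [hP0 z])

open Classical in
lemma sIf_split {F : Type*} [Fintype F] (P : F → ℝ) {p q r : F → Prop}
    (hpart : ∀ z, p z ↔ (q z ∨ r z)) (hdisj : ∀ z, ¬(q z ∧ r z)) :
    sIf P p = sIf P q + sIf P r := by
  unfold sIf
  rw [← Finset.sum_add_distrib]
  refine Finset.sum_congr rfl (fun z _ => ?_)
  by_cases hq : q z <;> by_cases hr : r z
  · exact absurd ⟨hq, hr⟩ (hdisj z)
  · simp [hq, hr, (hpart z).2 (Or.inl hq)]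
  · simp [hq, hr, (hpart z).2 (Or.inr hr)]
  · have hp : ¬ p z := fun h => ((hpart z).1 h).elim hq hr
    simp [hq, hr, hp]

lemma condPr_nonneg {F : Type*} [Fintype F] {P : F → ℝ} (hP0 : ∀ x, 0 ≤ P x)
    (A B : F → Prop) : 0 ≤ condPr P A B := by
  rw [condPr_eq]; exact div_nonneg (sIf_nonneg hP0 _) (sIf_nonneg hP0 _)

lemma key_alg (W1 W0 M1 M0 : ℝ) (h1 : 0 ≤ M1) (h2 : M1 ≤ W1) (h3 : 0 ≤ M0) (h4 : M0 ≤ W0) :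
    M1 * (M1 / W1) + (W1 - M1) * ((W1 - M1) / W1)
      + M0 * (M0 / W0) + (W0 - M0) * ((W0 - M0) / W0)
    - ((M1 + M0) * ((M1 + M0) / (W1 + W0))
      + ((W1 + W0) - (M1 + M0)) * (((W1 + W0) - (M1 + M0)) / (W1 + W0)))
    = 2 * (W1 + W0) * (W1 / (W1 + W0)) * (W0 / (W1 + W0)) * (M1 / W1 - M0 / W0) ^ 2 := by
  rcases eq_or_lt_of_le (h1.trans h2) with hW1 | hW1
  · have hM1 : M1 = 0 := le_antisymm (hW1 ▸ h2) h1
    simp [← hW1, hM1]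
  rcases eq_or_lt_of_le (h3.trans h4) with hW0 | hW0
  · have hM0 : M0 = 0 := le_antisymm (hW0 ▸ h4) h3
    simp [← hW0, hM0]
  have hW : (0:ℝ) < W1 + W0 := by linarith
  field_simp
  ring

open Classical in
/-- for a Boolean classifier and a binary coordinate `t ∉ S`
(`X_t = {b₀, b₁}`), the marginal gain of adding `t` to `S` is
`Σ_a 2 · Pr(z_S = a) · P₁(a) · P₀(a) · (g₁(a) − g₀(a))² ≥ 0`, where
`P_b(a) = Pr(z_t = b | z_S = a)` and `g_b(a) = Pr(f z = 1 | z_S = a, z_t = b)`. -/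
theorem vgSuff_binary_marginal_gain {n : ℕ} {X : Fin n → Type*}
    [∀ i, Fintype (X i)] [∀ i, Nonempty (X i)]
    (f : (∀ i, X i) → Bool) (P : (∀ i, X i) → ℝ)
    (hP0 : ∀ x, 0 ≤ P x) (hP1 : ∑ x, P x = 1)
    (S : Finset (Fin n)) (t : Fin n) (ht : t ∉ S)
    (b₀ b₁ : X t) (hne : b₀ ≠ b₁) (hcover : ∀ v : X t, v = b₀ ∨ v = b₁) :
    vgSuff f P (insert t S) - vgSuff f P S =
      (∑ a ∈ Finset.univ.filter (fun a : ∀ i : S, X i => 0 < prOn P S a),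
        2 * prOn P S a
          * condPr P (fun z => z t = b₁) (fun z => ∀ i : S, z i = a i)
          * condPr P (fun z => z t = b₀) (fun z => ∀ i : S, z i = a i)
          * (condPr P (fun z => f z = true) (fun z => (∀ i : S, z i = a i) ∧ z t = b₁)
              - condPr P (fun z => f z = true)
                  (fun z => (∀ i : S, z i = a i) ∧ z t = b₀)) ^ 2) ∧
    0 ≤ vgSuff f P (insert t S) - vgSuff f P S := by
  have key : vgSuff f P (insert t S) - vgSuff f P S =
      (∑ a ∈ Finset.univ.filter (fun a : ∀ i : S, X i => 0 < prOn P S a),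
        2 * prOn P S a
          * condPr P (fun z => z t = b₁) (fun z => ∀ i : S, z i = a i)
          * condPr P (fun z => z t = b₀) (fun z => ∀ i : S, z i = a i)
          * (condPr P (fun z => f z = true) (fun z => (∀ i : S, z i = a i) ∧ z t = b₁)
              - condPr P (fun z => f z = true)
                  (fun z => (∀ i : S, z i = a i) ∧ z t = b₀)) ^ 2) := by
    rw [Finset.sum_filter_of_ne (fun a _ hne0 => by
      by_contra hlt
      have h0 : prOn P S a = 0 := le_antisymm (not_lt.1 hlt)
        (by rw [prOn_eq]; exact sIf_nonneg hP0 _)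
      exact hne0 (by rw [h0]; ring))]
    rw [vg_rw f P hP0 S, vg_rw_insert f P hP0 S t b₀ b₁ hne hcover,
      ← Finset.sum_sub_distrib]
    apply Finset.sum_congr rfl
    intro a _
    rw [condPr_eq, condPr_eq, condPr_eq, condPr_eq, prOn_eq]
    have e1 : sIf P (fun z => z t = b₁ ∧ ∀ i : S, z i = a i)
        = sIf P (fun z => (∀ i : S, z i = a i) ∧ z t = b₁) :=
      sIf_congr P (fun z => and_comm)
    have e0 : sIf P (fun z => z t = b₀ ∧ ∀ i : S, z i = a i)
        = sIf P (fun z => (∀ i : S, z i = a i) ∧ z t = b₀) :=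
      sIf_congr P (fun z => and_comm)
    have e3 : sIf P (fun z => f z = true ∧ ((∀ i : S, z i = a i) ∧ z t = b₁))
        = sIf P (fun z => (∀ i : S, z i = a i) ∧ z t = b₁ ∧ f z = true) :=
      sIf_congr P (fun z => by tauto)
    have e4 : sIf P (fun z => f z = true ∧ ((∀ i : S, z i = a i) ∧ z t = b₀))
        = sIf P (fun z => (∀ i : S, z i = a i) ∧ z t = b₀ ∧ f z = true) :=
      sIf_congr P (fun z => by tauto)
    rw [e1, e0, e3, e4]
    have hsW : sIf P (fun z => ∀ i : S, z i = a i)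
        = sIf P (fun z => (∀ i : S, z i = a i) ∧ z t = b₁)
          + sIf P (fun z => (∀ i : S, z i = a i) ∧ z t = b₀) := by
      refine sIf_split P (fun z => ?_) (fun z => ?_)
      · rcases hcover (z t) with h | h <;> tauto
      · rintro ⟨⟨-, h1⟩, ⟨-, h0⟩⟩; exact hne (h0.symm.trans h1)
    have hsM : sIf P (fun z => (∀ i : S, z i = a i) ∧ f z = true)
        = sIf P (fun z => (∀ i : S, z i = a i) ∧ z t = b₁ ∧ f z = true)
          + sIf P (fun z => (∀ i : S, z i = a i) ∧ z t = b₀ ∧ f z = true) := by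
      refine sIf_split P (fun z => ?_) (fun z => ?_)
      · rcases hcover (z t) with h | h <;> tauto
      · rintro ⟨⟨-, h1, -⟩, ⟨-, h0, -⟩⟩; exact hne (h0.symm.trans h1)
    have h1 : sIf P (fun z => (∀ i : S, z i = a i) ∧ z t = b₁)
        = sIf P (fun z => (∀ i : S, z i = a i) ∧ z t = b₁ ∧ f z = true)
          + sIf P (fun z => (∀ i : S, z i = a i) ∧ z t = b₁ ∧ f z = false) := by
      refine sIf_split P (fun z => ?_) (fun z => ?_)
      · rcases Bool.dichotomy (f z) with h | h <;> tauto
      · rintro ⟨⟨-, -, hT⟩, ⟨-, -, hF⟩⟩; rw [hT] at hF; exact Bool.noConfusion hF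
    have h0 : sIf P (fun z => (∀ i : S, z i = a i) ∧ z t = b₀)
        = sIf P (fun z => (∀ i : S, z i = a i) ∧ z t = b₀ ∧ f z = true)
          + sIf P (fun z => (∀ i : S, z i = a i) ∧ z t = b₀ ∧ f z = false) := by
      refine sIf_split P (fun z => ?_) (fun z => ?_)
      · rcases Bool.dichotomy (f z) with h | h <;> tauto
      · rintro ⟨⟨-, -, hT⟩, ⟨-, -, hF⟩⟩; rw [hT] at hF; exact Bool.noConfusion hF
    have hW : sIf P (fun z => ∀ i : S, z i = a i)
        = sIf P (fun z => (∀ i : S, z i = a i) ∧ f z = true)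
          + sIf P (fun z => (∀ i : S, z i = a i) ∧ f z = false) := by
      refine sIf_split P (fun z => ?_) (fun z => ?_)
      · rcases Bool.dichotomy (f z) with h | h <;> tauto
      · rintro ⟨⟨-, hT⟩, ⟨-, hF⟩⟩; rw [hT] at hF; exact Bool.noConfusion hF
    have nM1 := sIf_nonneg hP0 (fun z => (∀ i : S, z i = a i) ∧ z t = b₁ ∧ f z = true)
    have nF1 := sIf_nonneg hP0 (fun z => (∀ i : S, z i = a i) ∧ z t = b₁ ∧ f z = false)
    have nM0 := sIf_nonneg hP0 (fun z => (∀ i : S, z i = a i) ∧ z t = b₀ ∧ f z = true)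
    have nF0 := sIf_nonneg hP0 (fun z => (∀ i : S, z i = a i) ∧ z t = b₀ ∧ f z = false)
    have hF1 : sIf P (fun z => (∀ i : S, z i = a i) ∧ z t = b₁ ∧ f z = false)
        = sIf P (fun z => (∀ i : S, z i = a i) ∧ z t = b₁)
          - sIf P (fun z => (∀ i : S, z i = a i) ∧ z t = b₁ ∧ f z = true) := by
      linarith
    have hF0 : sIf P (fun z => (∀ i : S, z i = a i) ∧ z t = b₀ ∧ f z = false)
        = sIf P (fun z => (∀ i : S, z i = a i) ∧ z t = b₀)
          - sIf P (fun z => (∀ i : S, z i = a i) ∧ z t = b₀ ∧ f z = true) := by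
      linarith
    have hF : sIf P (fun z => (∀ i : S, z i = a i) ∧ f z = false)
        = (sIf P (fun z => (∀ i : S, z i = a i) ∧ z t = b₁)
            + sIf P (fun z => (∀ i : S, z i = a i) ∧ z t = b₀))
          - (sIf P (fun z => (∀ i : S, z i = a i) ∧ z t = b₁ ∧ f z = true)
            + sIf P (fun z => (∀ i : S, z i = a i) ∧ z t = b₀ ∧ f z = true)) := by
      linarith
    rw [hF1, hF0, hF, hsM, hsW]
    exact key_alg _ _ _ _ nM1 (by linarith) nM0 (by linarith)
  refine ⟨key, ?_⟩
  rw [key]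
  apply Finset.sum_nonneg
  intro a _
  have hpr : 0 ≤ prOn P S a := by rw [prOn_eq]; exact sIf_nonneg hP0 _
  apply mul_nonneg
  apply mul_nonneg
  apply mul_nonneg
  · exact mul_nonneg (by norm_num) hpr
  · exact condPr_nonneg hP0 _ _
  · exact condPr_nonneg hP0 _ _
  · exact sq_nonneg _
end

section
/- Let f : F → C be a classifier on a finite product input space F = X_1 × ⋯ × X_n, let D be an arbitrary distribution on F, let S ⊆ {1,…,n}, and let t ∉ S. Then v^g_suff(S ∪ {t}) − v^g_suff(S) = Σ_{a} Pr(z_S = a) · Σ_{j ∈ C} Σ_{{v,w}} P_v(a) · P_w(a) · ( g_v^j(a) − g_w^j(a) )² ≥ 0, where the outer sum ranges over tuples a of values for S with Pr(z_S = a) > 0, the inner sum ranges over unordered pairs {v,w} of distinct values in X_t, P_v(a) = Pr(z_t = v | z_S = a), g_v^j(a) = Pr_{z∼D}(f(z) = j | z_S = a, z_t = v), and summands for which P_v(a)·P_w(a) = 0 are taken to be 0. -/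
/-!
Grouping the points of `F` by the key `(z_S, f z)` turns `v^g_suff(S)` into
`Σ_a Σ_j Pr(z_S = a, f = j)² / Pr(z_S = a)`, and adding `t` refines each fibre `{z_S = a}`
by the value `v` of `z_t`. For fixed `a` and `j` the gain
`Σ_v Pr(a, v, j)² / Pr(a, v) - Pr(a, j)² / Pr(a)` is `Pr(a)` times the variance of
`v ↦ g_v^j(a)` under the weights `P_v(a)`, and Lagrange's identity writes this variance as
half the weighted sum of `(g_v^j(a) - g_w^j(a))²` over ordered pairs `v ≠ w`.
-/

open Finset

section WeightedVariance

variable {ι : Type*} [Fintype ι] [DecidableEq ι]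

theorem sum_offDiag_mul_mul_sub_sq (q g : ι → ℝ) :
    ∑ p ∈ univ.offDiag, q p.1 * q p.2 * (g p.1 - g p.2) ^ 2
      = 2 * ((∑ i, q i) * ∑ i, q i * g i ^ 2 - (∑ i, q i * g i) ^ 2) := by
  have hsub : (univ : Finset ι).offDiag ⊆ univ ×ˢ univ := fun p _ => by simp
  rw [sum_subset hsub fun p _ hp => by
    simp [show p.1 = p.2 by simpa [mem_offDiag] using hp], sum_product]
  have expand : ∀ v w, q v * q w * (g v - g w) ^ 2
      = q v * g v ^ 2 * q w + q v * (q w * g w ^ 2) - 2 * (q v * g v * (q w * g w)) :=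
    fun _ _ => by ring
  simp only [expand, sum_sub_distrib, sum_add_distrib, ← mul_sum, ← sum_mul]
  ring

theorem sum_sq_div_sub_sq_div_sum_eq (q m : ι → ℝ) (hm : ∀ i, q i = 0 → m i = 0)
    (hQ : ∑ i, q i ≠ 0) :
    ∑ i, m i ^ 2 / q i - (∑ i, m i) ^ 2 / ∑ i, q i
      = (∑ i, q i) * ((∑ p ∈ univ.offDiag, q p.1 / (∑ i, q i) * (q p.2 / ∑ i, q i)
          * (m p.1 / q p.1 - m p.2 / q p.2) ^ 2) / 2) := by
  have hsum : ∑ i, m i = ∑ i, q i * (m i / q i) := sum_congr rfl fun i _ => by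
    by_cases hq : q i = 0
    · simp [hq, hm i hq]
    · field_simp
  have hsq : ∀ i, m i ^ 2 / q i = q i * (m i / q i) ^ 2 := fun i => by
    by_cases hq : q i = 0
    · simp [hq]
    · field_simp
  have hscale : ∀ p : ι × ι, q p.1 / (∑ i, q i) * (q p.2 / ∑ i, q i)
      * (m p.1 / q p.1 - m p.2 / q p.2) ^ 2
      = q p.1 * q p.2 * (m p.1 / q p.1 - m p.2 / q p.2) ^ 2 / (∑ i, q i) ^ 2 :=
    fun p => by ring
  simp only [hsq, hscale, ← sum_div]
  rw [hsum, sum_offDiag_mul_mul_sub_sq q fun i => m i / q i]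
  field_simp

end WeightedVariance

namespace FiniteMass

variable {F : Type*} [Fintype F]

open Classical in
noncomputable def mass (P : F → ℝ) (A : F → Prop) : ℝ :=
  ∑ z, if A z then P z else 0

noncomputable def suffValue {C κ : Type*} (f : F → C) (P : F → ℝ) (k : F → κ) : ℝ :=
  ∑ x ∈ univ.filter (fun x => 0 < P x),
    P x * condPr P (fun z => f z = f x) (fun z => k z = k x)

theorem condPr_eq_mass_div (P : F → ℝ) (A B : F → Prop) :
    condPr P A B = mass P (fun z => A z ∧ B z) / mass P B := by
  unfold condPr mass
  congr!

variable {P : F → ℝ} {κ ν : Type*} [Fintype κ] [Fintype ν]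

theorem mass_congr {A B : F → Prop} (h : ∀ z, A z ↔ B z) : mass P A = mass P B := by
  rw [funext fun z => propext (h z)]

theorem mass_nonneg (hP : ∀ z, 0 ≤ P z) (A : F → Prop) : 0 ≤ mass P A := by
  classical
  exact sum_nonneg fun z _ => by split_ifs <;> simp [hP z]

theorem mass_mono (hP : ∀ z, 0 ≤ P z) {A B : F → Prop} (h : ∀ z, A z → B z) :
    mass P A ≤ mass P B := by
  classical
  refine sum_le_sum fun z _ => ?_
  by_cases hA : A z
  · simp [hA, h z hA]
  · by_cases hB : B z <;> simp [hA, hB, hP z]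

theorem mass_eq_zero_of_imp (hP : ∀ z, 0 ≤ P z) {A B : F → Prop} (h : ∀ z, A z → B z)
    (hB : mass P B = 0) : mass P A = 0 :=
  le_antisymm (hB ▸ mass_mono hP h) (mass_nonneg hP A)

theorem condPr_nonneg (hP : ∀ z, 0 ≤ P z) (A B : F → Prop) : 0 ≤ condPr P A B :=
  condPr_eq_mass_div P A B ▸ div_nonneg (mass_nonneg hP _) (mass_nonneg hP _)

theorem sum_mass_and_eq (ℓ : F → ν) (A : F → Prop) :
    ∑ c, mass P (fun z => A z ∧ ℓ z = c) = mass P A := by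
  classical
  simp only [mass]
  rw [sum_comm]
  exact sum_congr rfl fun z _ => by by_cases hA : A z <;> simp [hA]

theorem sum_mul_comp_eq_sum_mass_mul (k : F → κ) (h : κ → ℝ) :
    ∑ x, P x * h (k x) = ∑ b, mass P (fun z => k z = b) * h b := by
  classical
  rw [← sum_fiberwise univ k]
  refine sum_congr rfl fun b _ => ?_
  rw [mass, ← sum_filter, sum_mul]
  exact sum_congr rfl fun x hx => by rw [(mem_filter.1 hx).2]

variable {C : Type*} [Fintype C] {f : F → C}

theorem suffValue_eq_sum_mass (hP : ∀ z, 0 ≤ P z) (k : F → κ) :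
    suffValue f P k
      = ∑ b, ∑ j, mass P (fun z => f z = j ∧ k z = b) ^ 2 / mass P (fun z => k z = b) := by
  have hfilter : suffValue f P k
      = ∑ x, P x * condPr P (fun z => f z = f x) (fun z => k z = k x) :=
    sum_subset (filter_subset _ _) fun x _ hx => by
      simp [le_antisymm (not_lt.1 (by simpa using hx)) (hP x)]
  calc suffValue f P k
      = ∑ x, P x * (fun b : κ × C => mass P (fun z => f z = b.2 ∧ k z = b.1)
          / mass P (fun z => k z = b.1)) (k x, f x) := by
        rw [hfilter]
        exact sum_congr rfl fun x _ => by rw [condPr_eq_mass_div]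
    _ = ∑ b : κ × C, mass P (fun z => (k z, f z) = b)
          * (mass P (fun z => f z = b.2 ∧ k z = b.1) / mass P (fun z => k z = b.1)) :=
        sum_mul_comp_eq_sum_mass_mul (fun x => (k x, f x)) fun b =>
          mass P (fun z => f z = b.2 ∧ k z = b.1) / mass P (fun z => k z = b.1)
    _ = _ := by
        rw [Fintype.sum_prod_type]
        refine sum_congr rfl fun b _ => sum_congr rfl fun j _ => ?_
        rw [mass_congr (B := fun z => f z = j ∧ k z = b) fun z => by
          rw [Prod.mk.injEq, and_comm]]
        ring

theorem sum_sq_mass_div_sub_sq_mass_div_eq [DecidableEq ν] (hP : ∀ z, 0 ≤ P z)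
    (A B : F → Prop) (ℓ : F → ν) (hB : mass P B ≠ 0) :
    ∑ c, mass P (fun z => A z ∧ B z ∧ ℓ z = c) ^ 2 / mass P (fun z => B z ∧ ℓ z = c)
        - mass P (fun z => A z ∧ B z) ^ 2 / mass P B
      = mass P B * ((∑ p ∈ univ.offDiag,
          condPr P (fun z => ℓ z = p.1) B * condPr P (fun z => ℓ z = p.2) B
            * (condPr P A (fun z => B z ∧ ℓ z = p.1)
              - condPr P A (fun z => B z ∧ ℓ z = p.2)) ^ 2) / 2) := by
  have htot := sum_mass_and_eq (P := P) ℓ B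
  have hA : ∑ c, mass P (fun z => A z ∧ B z ∧ ℓ z = c) = mass P (fun z => A z ∧ B z) := by
    simp only [← and_assoc]
    exact sum_mass_and_eq ℓ _
  have hcomm : ∀ c, mass P (fun z => ℓ z = c ∧ B z) = mass P (fun z => B z ∧ ℓ z = c) :=
    fun c => mass_congr fun z => and_comm
  rw [← hA, ← htot, sum_sq_div_sub_sq_div_sum_eq _ _
    (fun c hc => mass_eq_zero_of_imp hP (fun z hz => hz.2) hc) (htot ▸ hB)]
  simp only [condPr_eq_mass_div, hcomm, htot]

theorem suffValue_prod_sub [DecidableEq ν] (hP : ∀ z, 0 ≤ P z) (k : F → κ) (ℓ : F → ν) :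
    suffValue f P (fun z => (k z, ℓ z)) - suffValue f P k
      = ∑ b ∈ univ.filter (fun b => 0 < mass P (fun z => k z = b)),
          mass P (fun z => k z = b) * ∑ j, (∑ p ∈ univ.offDiag,
            condPr P (fun z => ℓ z = p.1) (fun z => k z = b)
              * condPr P (fun z => ℓ z = p.2) (fun z => k z = b)
              * (condPr P (fun z => f z = j) (fun z => k z = b ∧ ℓ z = p.1)
                - condPr P (fun z => f z = j) (fun z => k z = b ∧ ℓ z = p.2)) ^ 2) / 2 := by
  rw [suffValue_eq_sum_mass hP, suffValue_eq_sum_mass hP, Fintype.sum_prod_type,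
    ← sum_sub_distrib]
  simp only [Prod.mk.injEq]
  -- a fibre of mass zero contributes nothing on the left, as `x / 0 = 0`
  rw [← sum_subset (filter_subset (fun b => 0 < mass P (fun z => k z = b)) _) fun b _ hb => by
    have hb0 : mass P (fun z => k z = b) = 0 :=
      le_antisymm (not_lt.1 (by simpa using hb)) (mass_nonneg hP _)
    have hbc : ∀ c, mass P (fun z => k z = b ∧ ℓ z = c) = 0 :=
      fun c => mass_eq_zero_of_imp hP (fun z hz => hz.1) hb0
    simp [hb0, hbc]]
  refine sum_congr rfl fun b hb => ?_
  rw [sum_comm, ← sum_sub_distrib, mul_sum]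
  exact sum_congr rfl fun j _ =>
    sum_sq_mass_div_sub_sq_mass_div_eq hP _ _ ℓ (mem_filter.1 hb).2.ne'

theorem suffValue_le_suffValue_prod (hP : ∀ z, 0 ≤ P z) (k : F → κ) (ℓ : F → ν) :
    suffValue f P k ≤ suffValue f P (fun z => (k z, ℓ z)) := by
  classical
  rw [← sub_nonneg, suffValue_prod_sub hP]
  exact sum_nonneg fun b _ => mul_nonneg (mass_nonneg hP _) <| sum_nonneg fun j _ =>
    div_nonneg (sum_nonneg fun p _ => mul_nonneg
      (mul_nonneg (condPr_nonneg hP _ _) (condPr_nonneg hP _ _)) (sq_nonneg _)) zero_le_two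

end FiniteMass

open FiniteMass

theorem prOn_eq_mass {n : ℕ} {X : Fin n → Type*} [∀ i, Fintype (X i)]
    (P : (∀ i, X i) → ℝ) (S : Finset (Fin n)) (a : ∀ i : S, X i) :
    prOn P S a = mass P (fun z => ∀ i : S, z i = a i) := by
  unfold prOn mass
  congr!

theorem vgSuff_eq_suffValue {n : ℕ} {X : Fin n → Type*} [∀ i, Fintype (X i)] {C : Type*}
    (f : (∀ i, X i) → C) (P : (∀ i, X i) → ℝ) (S : Finset (Fin n)) :
    vgSuff f P S = suffValue f P S.restrict := by
  unfold vgSuff suffValue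
  simp only [funext_iff, restrict, Subtype.forall]

theorem vgSuff_insert_eq_suffValue {n : ℕ} {X : Fin n → Type*} [∀ i, Fintype (X i)]
    {C : Type*} (f : (∀ i, X i) → C) (P : (∀ i, X i) → ℝ) (S : Finset (Fin n)) (t : Fin n) :
    vgSuff f P (insert t S) = suffValue f P (fun z => (S.restrict z, z t)) := by
  unfold vgSuff suffValue
  simp only [forall_mem_insert, Prod.mk.injEq, funext_iff, restrict, Subtype.forall, and_comm]

open Classical in
theorem vgSuff_marginal_gain_general {n : ℕ} {X : Fin n → Type*}
    [∀ i, Fintype (X i)]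
    {C : Type*} [Fintype C]
    (f : (∀ i, X i) → C) (P : (∀ i, X i) → ℝ)
    (hP0 : ∀ x, 0 ≤ P x)
    (S : Finset (Fin n)) (t : Fin n) :
    vgSuff f P (insert t S) - vgSuff f P S =
      (∑ a ∈ Finset.univ.filter (fun a : ∀ i : S, X i => 0 < prOn P S a),
        prOn P S a *
          ∑ j : C,
            (∑ p ∈ (Finset.univ : Finset (X t)).offDiag,
              condPr P (fun z => z t = p.1) (fun z => ∀ i : S, z i = a i)
                * condPr P (fun z => z t = p.2) (fun z => ∀ i : S, z i = a i)
                * (condPr P (fun z => f z = j)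
                      (fun z => (∀ i : S, z i = a i) ∧ z t = p.1)
                    - condPr P (fun z => f z = j)
                        (fun z => (∀ i : S, z i = a i) ∧ z t = p.2)) ^ 2) / 2) ∧
    0 ≤ vgSuff f P (insert t S) - vgSuff f P S := by
  rw [vgSuff_insert_eq_suffValue, vgSuff_eq_suffValue]
  have gain := suffValue_prod_sub (f := f) hP0 S.restrict fun z => z t
  simp only [funext_iff, restrict] at gain
  simp only [prOn_eq_mass]
  exact ⟨gain, sub_nonneg.2 (suffValue_le_suffValue_prod hP0 _ _)⟩

open Classical in
/-- for a general classifier and a coordinate `t ∉ S`, the marginal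
gain of adding `t` is
`Σ_a Pr(z_S = a) · Σ_{j ∈ C} Σ_{{v,w}} P_v(a) P_w(a) (g_v^j(a) − g_w^j(a))² ≥ 0`,
where the inner sum runs over unordered pairs `{v,w}` of distinct values of `X_t`
(realized as half the sum over ordered pairs of distinct values),
`P_v(a) = Pr(z_t = v | z_S = a)` and `g_v^j(a) = Pr(f z = j | z_S = a, z_t = v)`. -/
theorem vgSuff_marginal_gain {n : ℕ} {X : Fin n → Type*}
    [∀ i, Fintype (X i)] [∀ i, Nonempty (X i)]
    {C : Type*} [Fintype C] [Nonempty C]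
    (f : (∀ i, X i) → C) (P : (∀ i, X i) → ℝ)
    (hP0 : ∀ x, 0 ≤ P x) (hP1 : ∑ x, P x = 1)
    (S : Finset (Fin n)) (t : Fin n) (ht : t ∉ S) :
    vgSuff f P (insert t S) - vgSuff f P S =
      (∑ a ∈ Finset.univ.filter (fun a : ∀ i : S, X i => 0 < prOn P S a),
        prOn P S a *
          ∑ j : C,
            (∑ p ∈ (Finset.univ : Finset (X t)).offDiag,
              condPr P (fun z => z t = p.1) (fun z => ∀ i : S, z i = a i)
                * condPr P (fun z => z t = p.2) (fun z => ∀ i : S, z i = a i)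
                * (condPr P (fun z => f z = j)
                      (fun z => (∀ i : S, z i = a i) ∧ z t = p.1)
                    - condPr P (fun z => f z = j)
                        (fun z => (∀ i : S, z i = a i) ∧ z t = p.2)) ^ 2) / 2) ∧
    0 ≤ vgSuff f P (insert t S) - vgSuff f P S :=
  vgSuff_marginal_gain_general f P hP0 S t
end

section
/- Let f : F → C be a classifier on a finite product input space F = X_1 × ⋯ × X_n and let D be a product (feature-independent) distribution on F. Then the global sufficient value function v^g_suff is supermodular: for all S ⊆ S' ⊆ {1,…,n} and all i ∉ S', v^g_suff(S ∪ {i}) − v^g_suff(S) ≤ v^g_suff(S' ∪ {i}) − v^g_suff(S'). -/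
open Finset

/-!
For a product weight `P`, averaging `h` over the coordinates outside `S`,
`E_S h x = ∑ z, P z * h (x on S, z off S)`, is the conditional expectation given the coordinates
in `S`. Exchanging the `S`-coordinates of two independent samples preserves their joint weight,
which makes every `E_S` self-adjoint for `⟪·, ·⟫_P` and gives `E_S ∘ E_T = E_{S ∩ T}`; hence
`⟪E_A Y, E_B Y⟫ = ⟪Y, E_{A ∩ B} Y⟫`. With `Y_c` the indicator of the class `c`,
`v(S) = ∑ c, ⟪Y_c, E_S Y_c⟫`. Put `T = S ∪ {i}`, `T' = S' ∪ {i}`, `u = (E_{T'} - E_{S'}) Y_c` and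
`w = (E_T - E_S) Y_c`. Since `T ∩ S' = S`, both `⟪u, w⟫` and `⟪w, w⟫` equal the increment at `S`
and `⟪u, u⟫` the increment at `S'`, so their difference is `‖u - w‖² ≥ 0`.
-/

open RCLike

namespace Finset

variable {ι : Type*} [DecidableEq ι] {X : ι → Type*}

lemma piecewise_piecewise_swap (S : Finset ι) (x z : ∀ i, X i) :
    S.piecewise (S.piecewise x z) (S.piecewise z x) = x := by
  rw [piecewise_idem_left, piecewise_idem_right, piecewise_same]

lemma piecewise_piecewise_left_eq_piecewise_inter (S T : Finset ι) (x z w : ∀ i, X i) :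
    T.piecewise (S.piecewise x z) w = (S ∩ T).piecewise x (T.piecewise z w) := by
  funext j
  by_cases hS : j ∈ S <;> by_cases hT : j ∈ T <;> simp [piecewise, hS, hT]

end Finset

lemma wInner_self_nonneg {ι : Type*} [Fintype ι] {w : ι → ℝ} (hw : ∀ i, 0 ≤ w i) (f : ι → ℝ) :
    0 ≤ ⟪f, f⟫_[ℝ, w] :=
  sum_nonneg fun i _ => smul_nonneg (hw i) real_inner_self_nonneg

section

variable {ι : Type*} [DecidableEq ι] {X : ι → Type*}

def SwapInvariant (P : (∀ i, X i) → ℝ) : Prop :=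
  ∀ (S : Finset ι) (x z : ∀ i, X i), P (S.piecewise x z) * P (S.piecewise z x) = P x * P z

lemma swapInvariant_prod [Fintype ι] (p : ∀ i, X i → ℝ) :
    SwapInvariant fun x : ∀ i, X i => ∏ i, p i (x i) := by
  intro S x z
  simp only [← prod_mul_distrib]
  refine prod_congr rfl fun j _ => ?_
  by_cases hj : j ∈ S <;> simp [hj, mul_comm]

end

section

variable {ι : Type*} [Fintype ι] [DecidableEq ι] {X : ι → Type*} [∀ i, Fintype (X i)]

/-- The conditional expectation `E[h | z_S = x_S]` when the coordinates are independent
under `P`: the coordinates outside `S` are resampled. -/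
noncomputable def coordCondExp (P : (∀ i, X i) → ℝ) (S : Finset ι) (h : (∀ i, X i) → ℝ)
    (x : ∀ i, X i) : ℝ :=
  ∑ z, P z * h (S.piecewise x z)

namespace SwapInvariant

variable {P : (∀ i, X i) → ℝ}

lemma sum_sum_piecewise (hP : SwapInvariant P) (S : Finset ι)
    (ψ : (∀ i, X i) → (∀ i, X i) → ℝ) :
    ∑ x, ∑ z, P x * P z * ψ (S.piecewise x z) (S.piecewise z x) =
      ∑ x, ∑ z, P x * P z * ψ x z := by
  have hswap : Function.Involutive fun q : (∀ i, X i) × (∀ i, X i) =>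
      (S.piecewise q.1 q.2, S.piecewise q.2 q.1) := fun q => by
    simp only [piecewise_piecewise_swap]
  simp only [← Fintype.sum_prod_type']
  exact Fintype.sum_bijective _ hswap.bijective _ _ fun q => by rw [hP]

lemma sum_sum_piecewise_left (hP : SwapInvariant P) (hP1 : ∑ x, P x = 1) (S : Finset ι)
    (φ : (∀ i, X i) → ℝ) :
    ∑ x, ∑ z, P x * P z * φ (S.piecewise x z) = ∑ x, P x * φ x := by
  rw [hP.sum_sum_piecewise S fun x _ => φ x]
  simp only [mul_right_comm _ _ (φ _), ← mul_sum, hP1, mul_one]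

lemma wInner_coordCondExp_right_eq_left (hP : SwapInvariant P) (S : Finset ι)
    (g h : (∀ i, X i) → ℝ) :
    ⟪g, coordCondExp P S h⟫_[ℝ, P] = ⟪coordCondExp P S g, h⟫_[ℝ, P] := by
  have := hP.sum_sum_piecewise S fun x z => g (S.piecewise x z) * h x
  simp only [piecewise_piecewise_swap] at this
  simp only [wInner, coordCondExp, smul_eq_mul, mul_sum, sum_mul, Real.inner_apply]
  convert this using 3 <;> ring

lemma coordCondExp_coordCondExp (hP : SwapInvariant P) (hP1 : ∑ x, P x = 1) (S T : Finset ι)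
    (h : (∀ i, X i) → ℝ) :
    coordCondExp P S (coordCondExp P T h) = coordCondExp P (S ∩ T) h := by
  funext x
  have := hP.sum_sum_piecewise_left hP1 T fun z => h ((S ∩ T).piecewise x z)
  simp only [coordCondExp, mul_sum, piecewise_piecewise_left_eq_piecewise_inter, ← mul_assoc]
  exact this

lemma wInner_coordCondExp_coordCondExp (hP : SwapInvariant P) (hP1 : ∑ x, P x = 1)
    (S T : Finset ι) (Y : (∀ i, X i) → ℝ) :
    ⟪coordCondExp P S Y, coordCondExp P T Y⟫_[ℝ, P] = ⟪Y, coordCondExp P (S ∩ T) Y⟫_[ℝ, P] := by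
  rw [← hP.wInner_coordCondExp_right_eq_left, hP.coordCondExp_coordCondExp hP1]

lemma sub_wInner_coordCondExp_le (hP : SwapInvariant P) (hP0 : ∀ x, 0 ≤ P x)
    (hP1 : ∑ x, P x = 1) (Y : (∀ i, X i) → ℝ) {S S' T T' : Finset ι} (hST : S ⊆ T)
    (hS'T' : S' ⊆ T') (hTT' : T ⊆ T') (hTS' : T ∩ S' = S) :
    ⟪Y, coordCondExp P T Y⟫_[ℝ, P] - ⟪Y, coordCondExp P S Y⟫_[ℝ, P] ≤
      ⟪Y, coordCondExp P T' Y⟫_[ℝ, P] - ⟪Y, coordCondExp P S' Y⟫_[ℝ, P] := by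
  have hSS' : S ⊆ S' := hTS' ▸ inter_subset_right
  have hS'T : S' ∩ T = S := inter_comm T S' ▸ hTS'
  have h := wInner_self_nonneg hP0
    ((coordCondExp P T' Y - coordCondExp P S' Y) - (coordCondExp P T Y - coordCondExp P S Y))
  simp only [wInner_sub_left, wInner_sub_right, hP.wInner_coordCondExp_coordCondExp hP1,
    inter_self, inter_eq_left.2 hST, inter_eq_right.2 hST, inter_eq_left.2 hSS',
    inter_eq_right.2 hSS', inter_eq_left.2 (hST.trans hTT'), inter_eq_right.2 (hST.trans hTT'),
    inter_eq_left.2 hS'T', inter_eq_right.2 hS'T', inter_eq_left.2 hTT', inter_eq_right.2 hTT',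
    hTS', hS'T] at h
  linarith

open Classical in
lemma condPr_eq_coordCondExp (hP : SwapInvariant P) (hP0 : ∀ x, 0 ≤ P x) (hP1 : ∑ x, P x = 1)
    (A : (∀ i, X i) → Prop) (S : Finset ι) {x : ∀ i, X i} (hx : 0 < P x) :
    condPr P A (fun z => ∀ i ∈ S, z i = x i) =
      coordCondExp P S (fun z => if A z then 1 else 0) x := by
  set agree := fun z : ∀ i, X i => ∀ i ∈ S, z i = x i
  have hden : 0 < ∑ z, if agree z then P z else 0 := by
    refine hx.trans_le ?_
    simpa [agree] using single_le_sum (f := fun z => if agree z then P z else 0)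
      (fun z _ => ite_nonneg (hP0 z) le_rfl) (mem_univ x)
  have hnum : (∑ z, if A z ∧ agree z then P z else 0) =
      (∑ z, if agree z then P z else 0) * coordCondExp P S (fun z => if A z then 1 else 0) x := by
    calc (∑ z, if A z ∧ agree z then P z else 0)
        = ∑ z, P z * if A z ∧ agree z then 1 else 0 := by simp only [mul_ite, mul_one, mul_zero]
      _ = ∑ z, ∑ w, P z * P w * if A (S.piecewise z w) ∧ agree (S.piecewise z w) then 1 else 0 :=
          (hP.sum_sum_piecewise_left hP1 S _).symm
      _ = ∑ z, (if agree z then P z else 0) * ∑ w, P w * if A (S.piecewise x w) then 1 else 0 := by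
          refine sum_congr rfl fun z _ => ?_
          by_cases hz : agree z
          · have hzx w : S.piecewise z w = S.piecewise x w := S.piecewise_congr hz fun _ _ => rfl
            have hagree w : agree (S.piecewise x w) := fun i hi => piecewise_eq_of_mem _ _ _ hi
            simp only [hzx, hagree, and_true, if_pos hz, mul_sum, mul_assoc]
          · have hagree w : ¬agree (S.piecewise z w) := fun h =>
              hz fun i hi => (piecewise_eq_of_mem _ _ _ hi).symm.trans (h i hi)
            simp only [hagree, and_false, if_false, if_neg hz, mul_zero, zero_mul, sum_const_zero]
      _ = _ := by rw [sum_mul]; rfl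
  rw [condPr]
  convert div_eq_of_eq_mul hden.ne' (hnum.trans (mul_comm _ _)) using 5

end SwapInvariant

end

open Classical in
lemma vgSuff_eq_sum_wInner {n : ℕ} {X : Fin n → Type*} [∀ i, Fintype (X i)] {C : Type*}
    [Fintype C] (f : (∀ i, X i) → C) {P : (∀ i, X i) → ℝ} (hP : SwapInvariant P)
    (hP0 : ∀ x, 0 ≤ P x) (hP1 : ∑ x, P x = 1) (S : Finset (Fin n)) :
    vgSuff f P S = ∑ c, ⟪fun x => if f x = c then 1 else 0,
      coordCondExp P S fun x => if f x = c then 1 else 0⟫_[ℝ, P] := by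
  calc vgSuff f P S
      = ∑ x, P x * coordCondExp P S (fun z => if f z = f x then 1 else 0) x := by
        rw [vgSuff, sum_filter]
        refine sum_congr rfl fun x _ => ?_
        split_ifs with hx
        · rw [hP.condPr_eq_coordCondExp hP0 hP1 _ S hx]
        · rw [← (hP0 x).eq_of_not_lt hx, zero_mul]
    _ = ∑ x, ∑ c, P x * ((if f x = c then 1 else 0) *
          coordCondExp P S (fun z => if f z = c then 1 else 0) x) := by
        simp only [ite_mul, one_mul, zero_mul, mul_ite, mul_zero, sum_ite_eq, mem_univ, if_true]
    _ = _ := by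
        rw [sum_comm]
        simp only [wInner, smul_eq_mul, Real.inner_apply]

theorem vgSuff_supermodular_general {n : ℕ} {X : Fin n → Type*}
    [∀ i, Fintype (X i)]
    {C : Type*} [Fintype C]
    (f : (∀ i, X i) → C) (P : (∀ i, X i) → ℝ)
    (hP0 : ∀ x, 0 ≤ P x) (hP1 : ∑ x, P x = 1)
    (p : ∀ i, X i → ℝ)
    (hprod : ∀ x, P x = ∏ i, p i (x i))
    (S S' : Finset (Fin n)) (hSS' : S ⊆ S') (i : Fin n) (hi : i ∉ S') :
    vgSuff f P (insert i S) - vgSuff f P S ≤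
      vgSuff f P (insert i S') - vgSuff f P S' := by
  have hP : SwapInvariant P := funext hprod ▸ swapInvariant_prod p
  have hTS' : insert i S ∩ S' = S := by rw [insert_inter_of_notMem hi, inter_eq_left.2 hSS']
  simp only [vgSuff_eq_sum_wInner f hP hP0 hP1, ← sum_sub_distrib]
  exact sum_le_sum fun c _ => hP.sub_wInner_coordCondExp_le hP0 hP1 _ (subset_insert i S)
    (subset_insert i S') (insert_subset_insert i hSS') hTS'

/-- under a product (feature-independent) distribution, the global
sufficient value function is supermodular. -/
theorem vgSuff_supermodular {n : ℕ} {X : Fin n → Type*}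
    [∀ i, Fintype (X i)] [∀ i, Nonempty (X i)]
    {C : Type*} [Fintype C] [Nonempty C]
    (f : (∀ i, X i) → C) (P : (∀ i, X i) → ℝ)
    (hP0 : ∀ x, 0 ≤ P x) (hP1 : ∑ x, P x = 1)
    (p : ∀ i, X i → ℝ) (hp0 : ∀ i v, 0 ≤ p i v)
    (hprod : ∀ x, P x = ∏ i, p i (x i))
    (S S' : Finset (Fin n)) (hSS' : S ⊆ S') (i : Fin n) (hi : i ∉ S') :
    vgSuff f P (insert i S) - vgSuff f P S ≤
      vgSuff f P (insert i S') - vgSuff f P S' :=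
  vgSuff_supermodular_general f P hP0 hP1 p hprod S S' hSS' i hi
end

section
/- Let f : F → C be a classifier on a finite product input space F = X_1 × ⋯ × X_n and let D be a product (feature-independent) distribution on F. Then the global contrastive value function v^g_con is submodular: for all S ⊆ S' ⊆ {1,…,n} and all i ∉ S', v^g_con(S ∪ {i}) − v^g_con(S) ≥ v^g_con(S' ∪ {i}) − v^g_con(S'). -/
open Finset

open Classical in
/-- The global contrastive value function
`v^g_con(S) = Σ_{x : P x > 0} P x · Pr_{z∼D}(f z ≠ f x | z_S̄ = x_S̄)`,
where `S̄ = {1,…,n} \ S`. -/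
noncomputable def vgCon {n : ℕ} {X : Fin n → Type*} [∀ i, Fintype (X i)]
    {C : Type*} (f : (∀ i, X i) → C) (P : (∀ i, X i) → ℝ)
    (S : Finset (Fin n)) : ℝ :=
  ∑ x ∈ Finset.univ.filter (fun x => 0 < P x),
    P x * condPr P (fun z => f z ≠ f x) (fun z => ∀ i ∈ Sᶜ, z i = x i)

/-! Averaging out the coordinates in `S` is a linear operator `E_S = avgOver P S` on functions.
For a product mass the `E_S` are self-adjoint for the `P`-weighted inner product and satisfy
`E_S E_T = E_{S ∪ T}`, so they are commuting orthogonal projections. With `g_c` the indicator of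
class `c`, `vgCon S = 1 - ∑ c, ⟪g_c, E_S g_c⟫`. For commuting projections `E, F`,
`⟪h, h⟫ + ⟪h, E F h⟫ - ⟪h, E h⟫ - ⟪h, F h⟫ = ‖(1 - E)(1 - F) h‖² ≥ 0`; applied to
`E = E_{insert i S}`, `F = E_{S'}` and `h = E_S g_c` this is the submodularity. -/

namespace LinearMap.BilinForm

variable {R M : Type*} [CommRing R] [PartialOrder R] [IsOrderedRing R]
  [AddCommGroup M] [Module R M] {B : LinearMap.BilinForm R M} {E F : Module.End R M}

theorem apply_add_apply_le_of_commute (hB : ∀ x, 0 ≤ B x x)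
    (hE : IsIdempotentElem E) (hF : IsIdempotentElem F) (hEF : Commute E F)
    (hEs : B.IsSelfAdjoint E) (hFs : B.IsSelfAdjoint F) (h : M) :
    B h (E h) + B h (F h) ≤ B h h + B h (E (F h)) := by
  set A := (1 - E) * (1 - F) with hA_def
  have hcomm : Commute (1 - E) (1 - F) :=
    (Commute.one_right _).sub_right ((Commute.one_left F).sub_left hEF)
  have hA : IsIdempotentElem A := hE.one_sub.mul_of_commute hcomm hF.one_sub
  have hAs : B.IsSelfAdjoint A := by
    have hE' : B.IsSelfAdjoint ⇑(1 - E) := isAdjointPair_one.sub hEs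
    have hF' : B.IsSelfAdjoint ⇑(1 - F) := isAdjointPair_one.sub hFs
    have := hE'.mul hF'
    rwa [← hcomm.eq] at this
  have hAh : A h = h - F h - E h + E (F h) := by
    simp only [hA_def, Module.End.mul_apply, LinearMap.sub_apply, Module.End.one_apply, map_sub]
    abel
  have hnonneg := hB (A h)
  rw [hAs h (A h), ← Module.End.mul_apply, hA.eq, hAh] at hnonneg
  simp only [map_add, map_sub] at hnonneg
  rw [← sub_nonneg]
  convert hnonneg using 1
  abel

end LinearMap.BilinForm

section ProductMass

variable {n : ℕ} {X : Fin n → Type*}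

theorem mul_piecewise_swap_of_eq_prod {P : (∀ i, X i) → ℝ} {p : ∀ i, X i → ℝ}
    (hprod : ∀ x, P x = ∏ i, p i (x i)) (S : Finset (Fin n)) (u v : ∀ i, X i) :
    P (S.piecewise u v) * P (S.piecewise v u) = P u * P v := by
  simp only [hprod, ← prod_mul_distrib]
  refine prod_congr rfl fun j _ => ?_
  by_cases hj : j ∈ S <;> simp [hj, mul_comm]

variable [∀ i, Fintype (X i)] (P : (∀ i, X i) → ℝ)

def avgOver (S : Finset (Fin n)) : Module.End ℝ ((∀ i, X i) → ℝ) :=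
  ∑ z, P z • LinearMap.funLeft ℝ ℝ (fun x => S.piecewise z x)

def weightedInner : LinearMap.BilinForm ℝ ((∀ i, X i) → ℝ) :=
  LinearMap.mk₂ ℝ (fun g h => ∑ x, P x * (g x * h x))
    (fun g g' h => by simp only [Pi.add_apply, add_mul, mul_add, sum_add_distrib])
    (fun c g h => by
      simp only [Pi.smul_apply, smul_eq_mul, mul_sum]; exact sum_congr rfl fun _ _ => by ring)
    (fun g h h' => by simp only [Pi.add_apply, mul_add, sum_add_distrib])
    (fun c g h => by
      simp only [Pi.smul_apply, smul_eq_mul, mul_sum]; exact sum_congr rfl fun _ _ => by ring)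

variable {P}

theorem avgOver_apply (S : Finset (Fin n)) (g : (∀ i, X i) → ℝ) (x : ∀ i, X i) :
    avgOver P S g x = ∑ z, P z * g (S.piecewise z x) := by
  simp [avgOver, LinearMap.funLeft_apply]

theorem weightedInner_apply (g h : (∀ i, X i) → ℝ) :
    weightedInner P g h = ∑ x, P x * (g x * h x) := rfl

theorem weightedInner_self_nonneg (hP0 : ∀ x, 0 ≤ P x) (g : (∀ i, X i) → ℝ) :
    0 ≤ weightedInner P g g :=
  sum_nonneg fun x _ => mul_nonneg (hP0 x) (mul_self_nonneg _)

-- The only consequence of independence that is used: exchanging the `S`-coordinates of two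
-- points preserves the product of their masses.
variable
  (hswap : ∀ (S : Finset (Fin n)) u v, P (S.piecewise u v) * P (S.piecewise v u) = P u * P v)
include hswap

theorem sum_sum_mul_piecewise_swap (S : Finset (Fin n)) (G : (∀ i, X i) → (∀ i, X i) → ℝ) :
    ∑ u, ∑ v, P u * P v * G (S.piecewise u v) (S.piecewise v u) =
      ∑ u, ∑ v, P u * P v * G u v := by
  let σ : (∀ i, X i) × (∀ i, X i) → (∀ i, X i) × (∀ i, X i) :=
    fun w => (S.piecewise w.1 w.2, S.piecewise w.2 w.1)
  have hσ : Function.Involutive σ := fun w => by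
    simp only [σ, piecewise_idem_left, piecewise_idem_right, piecewise_same]
  simp only [← Fintype.sum_prod_type']
  exact Fintype.sum_equiv hσ.toPerm _ _ fun w => by
    simp only [Function.Involutive.coe_toPerm, σ, ← hswap S w.1 w.2]

theorem avgOver_isSelfAdjoint (S : Finset (Fin n)) :
    (weightedInner P).IsSelfAdjoint (avgOver P S) := fun g h => by
  have key := sum_sum_mul_piecewise_swap hswap S fun u v => g (S.piecewise u v) * h v
  simp only [piecewise_idem_left, piecewise_idem_right, piecewise_same] at key
  calc weightedInner P (avgOver P S g) h
      = ∑ x, ∑ z, P z * P x * (g (S.piecewise z x) * h x) := by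
        simp only [weightedInner_apply, avgOver_apply, mul_sum, sum_mul]
        exact sum_congr rfl fun _ _ => sum_congr rfl fun _ _ => by ring
    _ = ∑ u, ∑ v, P u * P v * (g u * h (S.piecewise v u)) := by rw [sum_comm, key]
    _ = weightedInner P g (avgOver P S h) := by
        simp only [weightedInner_apply, avgOver_apply, mul_sum]
        exact sum_congr rfl fun _ _ => sum_congr rfl fun _ _ => by ring

variable (hP1 : ∑ x, P x = 1)
include hP1

theorem sum_mul_eq_sum_sum_piecewise (S : Finset (Fin n)) (G : (∀ i, X i) → ℝ) :
    ∑ x, P x * G x = ∑ u, ∑ v, P u * P v * G (S.piecewise u v) := by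
  rw [sum_sum_mul_piecewise_swap hswap S fun u _ => G u]
  simp only [mul_right_comm _ _ (G _), ← mul_sum, hP1, mul_one]

theorem avgOver_mul (S T : Finset (Fin n)) :
    avgOver P S * avgOver P T = avgOver P (S ∪ T) := by
  ext g x
  simp only [Module.End.mul_apply, avgOver_apply, mul_sum]
  rw [sum_mul_eq_sum_sum_piecewise hswap hP1 T, sum_comm]
  refine sum_congr rfl fun z _ => sum_congr rfl fun w _ => ?_
  have hmerge : (S ∪ T).piecewise (T.piecewise z w) x = T.piecewise z (S.piecewise w x) := by
    ext j; by_cases hT : j ∈ T <;> by_cases hS : j ∈ S <;> simp [hT, hS]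
  rw [hmerge]
  ring

theorem isIdempotentElem_avgOver (S : Finset (Fin n)) : IsIdempotentElem (avgOver P S) := by
  rw [IsIdempotentElem, avgOver_mul hswap hP1, union_self]

theorem commute_avgOver (S T : Finset (Fin n)) : Commute (avgOver P S) (avgOver P T) := by
  rw [Commute, SemiconjBy, avgOver_mul hswap hP1, avgOver_mul hswap hP1, union_comm]

theorem weightedInner_avgOver_eq_of_subset {T W : Finset (Fin n)} (hTW : T ⊆ W)
    (g : (∀ i, X i) → ℝ) :
    weightedInner P g (avgOver P W g) =
      weightedInner P (avgOver P T g) (avgOver P W (avgOver P T g)) := by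
  rw [avgOver_isSelfAdjoint hswap T, ← Module.End.mul_apply, ← Module.End.mul_apply,
    avgOver_mul hswap hP1, avgOver_mul hswap hP1, union_eq_right.2 hTW, union_eq_left.2 hTW]

theorem weightedInner_avgOver_add_le (hP0 : ∀ x, 0 ≤ P x) (U V : Finset (Fin n))
    (g : (∀ i, X i) → ℝ) :
    weightedInner P g (avgOver P U g) + weightedInner P g (avgOver P V g) ≤
      weightedInner P g (avgOver P (U ∩ V) g) + weightedInner P g (avgOver P (U ∪ V) g) := by
  rw [weightedInner_avgOver_eq_of_subset hswap hP1 inter_subset_left g,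
    weightedInner_avgOver_eq_of_subset hswap hP1 inter_subset_right g,
    weightedInner_avgOver_eq_of_subset hswap hP1 subset_rfl g,
    weightedInner_avgOver_eq_of_subset hswap hP1 (inter_subset_left.trans subset_union_left) g,
    ← Module.End.mul_apply (avgOver P (U ∩ V)), (isIdempotentElem_avgOver hswap hP1 _).eq,
    ← avgOver_mul hswap hP1]
  exact LinearMap.BilinForm.apply_add_apply_le_of_commute (weightedInner_self_nonneg hP0)
    (isIdempotentElem_avgOver hswap hP1 U) (isIdempotentElem_avgOver hswap hP1 V)
    (commute_avgOver hswap hP1 U V) (avgOver_isSelfAdjoint hswap U)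
    (avgOver_isSelfAdjoint hswap V) _

end ProductMass

section ContrastiveValue

variable {n : ℕ} {X : Fin n → Type*} [∀ i, Fintype (X i)] {P : (∀ i, X i) → ℝ}
  (hP0 : ∀ x, 0 ≤ P x) (hP1 : ∑ x, P x = 1)
  (hswap : ∀ (S : Finset (Fin n)) u v, P (S.piecewise u v) * P (S.piecewise v u) = P u * P v)
include hP0 hP1 hswap

open Classical in
theorem condPr_eq_avgOver (S : Finset (Fin n)) {x : ∀ i, X i} (hx : 0 < P x)
    (A : (∀ i, X i) → Prop) [DecidablePred A] :
    condPr P A (fun z => ∀ i ∈ Sᶜ, z i = x i) = avgOver P S (fun y => if A y then 1 else 0) x := by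
  have hD : 0 < ∑ z, if (∀ i ∈ Sᶜ, z i = x i) then P z else 0 := hx.trans_le <| by
    simpa using single_le_sum (f := fun z => if (∀ i ∈ Sᶜ, z i = x i) then P z else 0)
      (fun z _ => by split_ifs <;> simp [hP0]) (mem_univ x)
  have hnum : (∑ z, if A z ∧ (∀ i ∈ Sᶜ, z i = x i) then P z else 0) =
      avgOver P S (fun y => if A y then 1 else 0) x *
        ∑ z, if (∀ i ∈ Sᶜ, z i = x i) then P z else 0 := by
    have hagree : ∀ u v : ∀ i, X i,
        (∀ i ∈ Sᶜ, S.piecewise u v i = x i) ↔ ∀ i ∈ Sᶜ, v i = x i := fun u v =>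
      forall₂_congr fun i hi => by rw [piecewise_eq_of_notMem _ _ _ (mem_compl.1 hi)]
    calc (∑ z, if A z ∧ (∀ i ∈ Sᶜ, z i = x i) then P z else 0)
        = ∑ z, P z * if A z ∧ (∀ i ∈ Sᶜ, z i = x i) then 1 else 0 := by
          simp only [mul_ite, mul_one, mul_zero]
      _ = ∑ u, ∑ v, P u * P v *
            if A (S.piecewise u v) ∧ (∀ i ∈ Sᶜ, S.piecewise u v i = x i) then 1 else 0 :=
          sum_mul_eq_sum_sum_piecewise hswap hP1 S _
      _ = ∑ u, ∑ v, (P u * if A (S.piecewise u x) then 1 else 0) *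
            if (∀ i ∈ Sᶜ, v i = x i) then P v else 0 := by
          refine sum_congr rfl fun u _ => sum_congr rfl fun v _ => ?_
          by_cases hv : ∀ i ∈ Sᶜ, v i = x i
          · have hux : S.piecewise u v = S.piecewise u x :=
              S.piecewise_congr (fun _ _ => rfl) fun i hi => hv i (mem_compl.2 hi)
            have hcond : (A (S.piecewise u v) ∧ ∀ i ∈ Sᶜ, S.piecewise u v i = x i) ↔
                A (S.piecewise u x) := by rw [hagree, hux]; exact and_iff_left hv
            rw [if_pos hv]
            by_cases hA : A (S.piecewise u x)
            · rw [if_pos (hcond.2 hA), if_pos hA]; ring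
            · rw [if_neg (mt hcond.1 hA), if_neg hA]; ring
          · rw [if_neg hv, if_neg fun h => hv ((hagree u v).1 h.2)]; ring
      _ = _ := by rw [avgOver_apply, sum_mul_sum]
  rw [condPr, ← mul_div_cancel_right₀ (avgOver P S (fun y => if A y then 1 else 0) x) hD.ne',
    ← hnum]
  -- the two sides differ only in their (classical vs. given) decidability instances
  convert rfl

open Classical in
theorem vgCon_eq_one_sub {C : Type*} [Fintype C] (f : (∀ i, X i) → C) (S : Finset (Fin n)) :
    vgCon f P S = 1 - ∑ c, weightedInner P (fun y => if f y = c then 1 else 0)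
      (avgOver P S fun y => if f y = c then 1 else 0) := by
  have hpt : ∀ x, avgOver P S (fun y => if f y ≠ f x then 1 else 0) x =
      1 - ∑ c, (if f x = c then 1 else 0) * avgOver P S (fun y => if f y = c then 1 else 0) x := by
    intro x
    simp only [avgOver_apply, ite_mul, one_mul, zero_mul, sum_ite_eq, mem_univ, if_true]
    rw [← hP1, ← sum_sub_distrib]
    refine sum_congr rfl fun z _ => ?_
    split_ifs <;> simp_all
  calc vgCon f P S
      = ∑ x ∈ univ.filter (fun x => 0 < P x),
          P x * avgOver P S (fun y => if f y ≠ f x then 1 else 0) x :=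
        sum_congr rfl fun x hx => by
          rw [condPr_eq_avgOver hP0 hP1 hswap S (mem_filter.1 hx).2]
    _ = ∑ x, P x * avgOver P S (fun y => if f y ≠ f x then 1 else 0) x :=
        sum_filter_of_ne fun x _ h => (hP0 x).lt_of_ne' (left_ne_zero_of_mul h)
    _ = _ := by
        simp only [hpt, weightedInner_apply, mul_sub, mul_one, sum_sub_distrib, hP1, mul_sum]
        rw [sum_comm]

end ContrastiveValue

theorem vgCon_submodular_general {n : ℕ} {X : Fin n → Type*}
    [∀ i, Fintype (X i)]
    {C : Type*} [Fintype C]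
    (f : (∀ i, X i) → C) (P : (∀ i, X i) → ℝ)
    (hP0 : ∀ x, 0 ≤ P x) (hP1 : ∑ x, P x = 1)
    (p : ∀ i, X i → ℝ)
    (hprod : ∀ x, P x = ∏ i, p i (x i))
    (S S' : Finset (Fin n)) (hSS' : S ⊆ S') (i : Fin n) (hi : i ∉ S') :
    vgCon f P (insert i S') - vgCon f P S' ≤
      vgCon f P (insert i S) - vgCon f P S := by
  classical
  have hswap := mul_piecewise_swap_of_eq_prod hprod
  have hcap : insert i S ∩ S' = S := by rw [insert_inter_of_notMem hi, inter_eq_left.2 hSS']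
  have hcup : insert i S ∪ S' = insert i S' := by rw [insert_union, union_eq_right.2 hSS']
  have hsum := sum_le_sum fun c (_ : c ∈ univ) => weightedInner_avgOver_add_le hswap hP1 hP0
    (insert i S) S' (fun y => if f y = c then 1 else 0)
  rw [hcap, hcup] at hsum
  simp only [vgCon_eq_one_sub hP0 hP1 hswap, sum_add_distrib] at hsum ⊢
  linarith

/-- under a product (feature-independent) distribution, the global
contrastive value function is submodular. -/
theorem vgCon_submodular {n : ℕ} {X : Fin n → Type*}
    [∀ i, Fintype (X i)] [∀ i, Nonempty (X i)]
    {C : Type*} [Fintype C] [Nonempty C]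
    (f : (∀ i, X i) → C) (P : (∀ i, X i) → ℝ)
    (hP0 : ∀ x, 0 ≤ P x) (hP1 : ∑ x, P x = 1)
    (p : ∀ i, X i → ℝ) (hp0 : ∀ i v, 0 ≤ p i v)
    (hprod : ∀ x, P x = ∏ i, p i (x i))
    (S S' : Finset (Fin n)) (hSS' : S ⊆ S') (i : Fin n) (hi : i ∉ S') :
    vgCon f P (insert i S') - vgCon f P S' ≤
      vgCon f P (insert i S) - vgCon f P S :=
  vgCon_submodular_general f P hP0 hP1 p hprod S S' hSS' i hi
end

section
/- Let F = {0,1}², let D be the uniform distribution on F (Pr(x) = 1/4 for all x), let f : F → {0,1} be f(x₁,x₂) = x₁ ∨ x₂, and let x = (0,1). Then the local sufficient value function satisfies v^ℓ_suff(∅) = 3/4, v^ℓ_suff({1}) = 1/2, v^ℓ_suff({2}) = 1, and v^ℓ_suff({1,2}) = 1; in particular v^ℓ_suff(∅) > v^ℓ_suff({1}), so the local sufficient value function is not monotone non-decreasing. -/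
open Finset

open Classical in
/-- The local sufficient value function at the point `x`:
`v^ℓ_suff(S) = Pr_{z∼D}(f z = f x | z_S = x_S)`. -/
noncomputable def vlSuff {n : ℕ} (f : (Fin n → Bool) → Bool)
    (P : (Fin n → Bool) → ℝ) (x : Fin n → Bool) (S : Finset (Fin n)) : ℝ :=
  condPr P (fun z => f z = f x) (fun z => ∀ i ∈ S, z i = x i)

lemma sum_fin2_bool (g : (Fin 2 → Bool) → ℝ) :
    ∑ z, g z = g ![false, false] + g ![false, true] + g ![true, false] + g ![true, true] := by
  have h := Fintype.sum_equiv (piFinTwoEquiv fun _ => Bool) g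
    (fun p : Bool × Bool => g ![p.1, p.2]) ?_
  · rw [h, Fintype.sum_prod_type, Fintype.sum_bool]
    simp [Fintype.sum_bool]
    ring
  · intro z
    congr 1
    funext i
    fin_cases i <;> rfl

/-- for the uniform distribution on `{0,1}²`, `f(x₁,x₂) = x₁ ∨ x₂`
and `x = (0,1)` (feature 1 is index `0`, feature 2 is index `1`), the local
sufficient value function takes the values `3/4, 1/2, 1, 1` on
`∅, {1}, {2}, {1,2}`; in particular `v^ℓ_suff(∅) > v^ℓ_suff({1})`, so it is not
monotone non-decreasing. -/
theorem vlSuff_not_monotone :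
    let f : (Fin 2 → Bool) → Bool := fun z => z 0 || z 1
    let P : (Fin 2 → Bool) → ℝ := fun _ => 1 / 4
    let x : Fin 2 → Bool := ![false, true]
    vlSuff f P x (∅ : Finset (Fin 2)) = 3 / 4 ∧
    vlSuff f P x {0} = 1 / 2 ∧
    vlSuff f P x {1} = 1 ∧
    vlSuff f P x {0, 1} = 1 ∧
    vlSuff f P x {0} < vlSuff f P x (∅ : Finset (Fin 2)) ∧
    ¬ (∀ S S' : Finset (Fin 2), S ⊆ S' → vlSuff f P x S ≤ vlSuff f P x S') := by
  intro f P x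
  have hE : vlSuff f P x (∅ : Finset (Fin 2)) = 3 / 4 := by
    simp only [vlSuff, condPr, sum_fin2_bool]
    norm_num [f, P, x, Matrix.cons_val_zero, Matrix.cons_val_one]
  have h0 : vlSuff f P x {0} = 1 / 2 := by
    simp only [vlSuff, condPr, sum_fin2_bool]
    norm_num [f, P, x, Finset.mem_insert, Matrix.cons_val_zero, Matrix.cons_val_one, Fin.forall_fin_two]
  have h1 : vlSuff f P x {1} = 1 := by
    simp only [vlSuff, condPr, sum_fin2_bool]
    norm_num [f, P, x, Finset.mem_insert, Matrix.cons_val_zero, Matrix.cons_val_one, Fin.forall_fin_two]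
  have h01 : vlSuff f P x {0, 1} = 1 := by
    simp only [vlSuff, condPr, sum_fin2_bool]
    norm_num [f, P, x, Finset.mem_insert, Matrix.cons_val_zero, Matrix.cons_val_one, Fin.forall_fin_two]
  refine ⟨hE, h0, h1, h01, by rw [hE, h0]; norm_num, ?_⟩
  intro h
  have := h ∅ {0} (Finset.empty_subset _)
  rw [hE, h0] at this
  norm_num at this
end

section
/- The local contrastive value function is not monotone non-decreasing in general: there exist n ∈ ℕ, a classifier f : {0,1}^n → {0,1}, a distribution D on {0,1}^n, an input x with Pr(x) > 0, and sets S ⊆ S' ⊆ {1,…,n} such that v^ℓ_con(S) > v^ℓ_con(S'). (For example, one may take n = 2, D uniform, f(x₁,x₂) = x₁ ∨ x₂, and x = (0,1).) -/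
open Finset

open Classical in
/-- The local contrastive value function at the point `x`:
`v^ℓ_con(S) = Pr_{z∼D}(f z ≠ f x | z_S̄ = x_S̄)`, where `S̄ = {1,…,n} \ S`. -/
noncomputable def vlCon {n : ℕ} (f : (Fin n → Bool) → Bool)
    (P : (Fin n → Bool) → ℝ) (x : Fin n → Bool) (S : Finset (Fin n)) : ℝ :=
  condPr P (fun z => f z ≠ f x) (fun z => ∀ i ∈ Sᶜ, z i = x i)

theorem sum_fin2bool (g : (Fin 2 → Bool) → ℝ) :
    ∑ z, g z = g ![false,false] + g ![false,true] + g ![true,false] + g ![true,true] := by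
  rw [← Fintype.sum_equiv (piFinTwoEquiv fun _ => Bool).symm
    (fun p => g ((piFinTwoEquiv fun _ => Bool).symm p)) g (fun p => rfl)]
  rw [Fintype.sum_prod_type]
  simp only [Fintype.sum_bool, piFinTwoEquiv, Equiv.coe_fn_symm_mk]
  have h : ∀ a b : Bool, (Fin.cons a (Fin.cons b finZeroElim) : Fin 2 → Bool) = ![a,b] := by
    intro a b; funext i; fin_cases i <;> rfl
  rw [h,h,h,h]; ring

/-- the local contrastive value function is not monotone
non-decreasing in general: there are `n`, a classifier `f` on `{0,1}^n`, a
distribution, a point `x` of positive probability, and `S ⊆ S'` with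
`v^ℓ_con(S) > v^ℓ_con(S')`. -/
theorem vlCon_not_monotone :
    ∃ (n : ℕ) (f : (Fin n → Bool) → Bool) (P : (Fin n → Bool) → ℝ),
      (∀ z, 0 ≤ P z) ∧ (∑ z, P z = 1) ∧
      ∃ x : Fin n → Bool, 0 < P x ∧
        ∃ S S' : Finset (Fin n), S ⊆ S' ∧ vlCon f P x S' < vlCon f P x S := by
  refine ⟨2, fun z => z 0 || z 1, fun _ => 1/4, fun _ => by norm_num, ?_,
    ![false, true], by norm_num, {1}, Finset.univ, Finset.subset_univ _, ?_⟩
  · rw [sum_fin2bool]; norm_num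
  · unfold vlCon condPr
    rw [sum_fin2bool, sum_fin2bool, sum_fin2bool, sum_fin2bool]
    norm_num [Fin.forall_fin_two]
end

section
/- Let F = {0,1}³, let D be the uniform distribution on F (Pr(x) = 1/8 for all x), let f : F → {0,1} be f(x₁,x₂,x₃) = (x₁ ∨ x₂) ∧ x₃, and let x = (1,1,1). Then the local sufficient value function satisfies v^ℓ_suff(∅) = 3/8, v^ℓ_suff({1}) = 1/2, v^ℓ_suff({2}) = 1/2, v^ℓ_suff({3}) = 3/4, v^ℓ_suff({1,2}) = 1/2, v^ℓ_suff({1,3}) = 1, v^ℓ_suff({2,3}) = 1, v^ℓ_suff({1,2,3}) = 1. Consequently v^ℓ_suff({1,2}) − v^ℓ_suff({2}) < v^ℓ_suff({1}) − v^ℓ_suff(∅) < v^ℓ_suff({1,3}) − v^ℓ_suff({3}), so v^ℓ_suff is neither supermodular nor submodular. -/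
open Finset

/-- Auxiliary equivalence used to expand sums over `Fin 3 → Bool`. -/
def e3aux : Bool × Bool × Bool ≃ (Fin 3 → Bool) where
  toFun p := ![p.1, p.2.1, p.2.2]
  invFun z := (z 0, z 1, z 2)
  left_inv := by decide
  right_inv := by decide

lemma sum8aux (g : (Fin 3 → Bool) → ℝ) :
    ∑ z, g z = g ![false,false,false] + g ![false,false,true] + g ![false,true,false]
      + g ![false,true,true] + g ![true,false,false] + g ![true,false,true]
      + g ![true,true,false] + g ![true,true,true] := by
  rw [← Equiv.sum_comp e3aux g, Fintype.sum_prod_type, Fintype.sum_bool]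
  simp [Fintype.sum_prod_type, Fintype.sum_bool, e3aux]
  ring

/-- for the uniform distribution on `{0,1}³`,
`f(x₁,x₂,x₃) = (x₁ ∨ x₂) ∧ x₃` and `x = (1,1,1)` (feature `k` is index `k-1`),
the local sufficient value function takes the listed values; consequently
`v({1,2}) − v({2}) < v({1}) − v(∅) < v({1,3}) − v({3})`, so `v^ℓ_suff` is
neither supermodular nor submodular. -/
theorem vlSuff_neither_supermodular_nor_submodular :
    let f : (Fin 3 → Bool) → Bool := fun z => (z 0 || z 1) && z 2
    let P : (Fin 3 → Bool) → ℝ := fun _ => 1 / 8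
    let x : Fin 3 → Bool := ![true, true, true]
    let v : Finset (Fin 3) → ℝ := vlSuff f P x
    v ∅ = 3 / 8 ∧ v {0} = 1 / 2 ∧ v {1} = 1 / 2 ∧ v {2} = 3 / 4 ∧
    v {0, 1} = 1 / 2 ∧ v {0, 2} = 1 ∧ v {1, 2} = 1 ∧ v {0, 1, 2} = 1 ∧
    v {0, 1} - v {1} < v {0} - v ∅ ∧ v {0} - v ∅ < v {0, 2} - v {2} ∧
    ¬ (∀ (S S' : Finset (Fin 3)) (i : Fin 3), S ⊆ S' → i ∉ S' →
        v (insert i S) - v S ≤ v (insert i S') - v S') ∧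
    ¬ (∀ (S S' : Finset (Fin 3)) (i : Fin 3), S ⊆ S' → i ∉ S' →
        v (insert i S') - v S' ≤ v (insert i S) - v S) := by
  intro f P x v
  have key : ∀ S : Finset (Fin 3), v S = vlSuff f P x S := fun _ => rfl
  have h0 : v ∅ = 3 / 8 := by
    simp only [vlSuff, condPr, v, f, P, x]
    rw [sum8aux, sum8aux]
    norm_num [Finset.mem_insert, Finset.mem_singleton, Matrix.cons_val_zero,
      Matrix.cons_val_one, Matrix.head_cons, Matrix.cons_val_two, Matrix.tail_cons]
  have h1 : v {0} = 1 / 2 := by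
    simp only [vlSuff, condPr, v, f, P, x]
    rw [sum8aux, sum8aux]
    norm_num [Finset.mem_insert, Finset.mem_singleton, Matrix.cons_val_zero,
      Matrix.cons_val_one, Matrix.head_cons, Matrix.cons_val_two, Matrix.tail_cons]
  have h2 : v {1} = 1 / 2 := by
    simp only [vlSuff, condPr, v, f, P, x]
    rw [sum8aux, sum8aux]
    norm_num [Finset.mem_insert, Finset.mem_singleton, Matrix.cons_val_zero,
      Matrix.cons_val_one, Matrix.head_cons, Matrix.cons_val_two, Matrix.tail_cons]
  have h3 : v {2} = 3 / 4 := by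
    simp only [vlSuff, condPr, v, f, P, x]
    rw [sum8aux, sum8aux]
    norm_num [Finset.mem_insert, Finset.mem_singleton, Matrix.cons_val_zero,
      Matrix.cons_val_one, Matrix.head_cons, Matrix.cons_val_two, Matrix.tail_cons]
  have h01 : v {0, 1} = 1 / 2 := by
    simp only [vlSuff, condPr, v, f, P, x]
    rw [sum8aux, sum8aux]
    norm_num [Finset.mem_insert, Finset.mem_singleton, Matrix.cons_val_zero,
      Matrix.cons_val_one, Matrix.head_cons, Matrix.cons_val_two, Matrix.tail_cons]
  have h02 : v {0, 2} = 1 := by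
    simp only [vlSuff, condPr, v, f, P, x]
    rw [sum8aux, sum8aux]
    norm_num [Finset.mem_insert, Finset.mem_singleton, Matrix.cons_val_zero,
      Matrix.cons_val_one, Matrix.head_cons, Matrix.cons_val_two, Matrix.tail_cons]
  have h12 : v {1, 2} = 1 := by
    simp only [vlSuff, condPr, v, f, P, x]
    rw [sum8aux, sum8aux]
    norm_num [Finset.mem_insert, Finset.mem_singleton, Matrix.cons_val_zero,
      Matrix.cons_val_one, Matrix.head_cons, Matrix.cons_val_two, Matrix.tail_cons]
  have h012 : v {0, 1, 2} = 1 := by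
    simp only [vlSuff, condPr, v, f, P, x]
    rw [sum8aux, sum8aux]
    norm_num [Finset.mem_insert, Finset.mem_singleton, Matrix.cons_val_zero,
      Matrix.cons_val_one, Matrix.head_cons, Matrix.cons_val_two, Matrix.tail_cons]
  refine ⟨h0, h1, h2, h3, h01, h02, h12, h012, by rw [h0, h1, h2, h01]; norm_num,
    by rw [h0, h1, h3, h02]; norm_num, ?_, ?_⟩
  · intro H
    have := H ∅ {1} 0 (by simp) (by decide)
    rw [show insert (0:Fin 3) ∅ = ({0} : Finset (Fin 3)) by decide, h0, h1, h2, h01] at this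
    norm_num at this
  · intro H
    have := H ∅ {2} 0 (by simp) (by decide)
    rw [show insert (0:Fin 3) ∅ = ({0} : Finset (Fin 3)) by decide, h0, h1, h3, h02] at this
    norm_num at this
end

section
/- The local contrastive value function is in general neither submodular nor supermodular: there exist n ∈ ℕ, a classifier f : {0,1}^n → {0,1}, a distribution D on {0,1}^n, an input x with Pr(x) > 0, and two choices of S ⊆ S' ⊆ {1,…,n} with i ∉ S' such that in one choice v^ℓ_con(S ∪ {i}) − v^ℓ_con(S) < v^ℓ_con(S' ∪ {i}) − v^ℓ_con(S') (violating submodularity) and in the other v^ℓ_con(S ∪ {i}) − v^ℓ_con(S) > v^ℓ_con(S' ∪ {i}) − v^ℓ_con(S') (violating supermodularity). -/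
/-!
Take the uniform distribution on `{0,1}³`, `x = 000`, and the classifier that is `1` exactly
on `110` and `001`, so that `v(S)` is the fraction of the subcube spanned by the coordinates
in `S` on which the classifier is `1`. Freeing coordinate `0` alone gains nothing. Once
coordinate `1` is free, freeing `0` as well reaches `110`, so the gain becomes positive. Once
coordinate `2` is free, freeing `0` doubles the subcube without reaching any new point where
the classifier is `1`, so the gain becomes negative.
-/

open Finset

theorem condPr_const {F : Type*} [Fintype F] {c : ℝ} (hc : c ≠ 0) (A B : F → Prop)
    [DecidablePred A] [DecidablePred B] :
    condPr (fun _ => c) A B = #{z | A z ∧ B z} / #{z | B z} := by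
  simp only [condPr, ← sum_filter, sum_const, nsmul_eq_mul]
  rw [mul_div_mul_right _ _ hc]

theorem vlCon_const_of_card {n : ℕ} (f : (Fin n → Bool) → Bool) {c : ℝ} (hc : c ≠ 0)
    (x : Fin n → Bool) (S : Finset (Fin n)) {a b : ℕ}
    (ha : #{z : Fin n → Bool | f z ≠ f x ∧ ∀ i ∈ Sᶜ, z i = x i} = a)
    (hb : #{z : Fin n → Bool | ∀ i ∈ Sᶜ, z i = x i} = b) :
    vlCon f (fun _ => c) x S = a / b := by
  rw [vlCon, condPr_const hc, ha, hb]

def exampleClassifier : (Fin 3 → Bool) → Bool :=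
  fun z => decide (z = ![true, true, false] ∨ z = ![false, false, true])

/-- the local contrastive value function is in general neither
submodular nor supermodular: there are `n`, `f`, a distribution, a point `x`
of positive probability, and two choices of `S ⊆ S'` with `i ∉ S'`, one
violating submodularity and one violating supermodularity. -/
theorem vlCon_neither_submodular_nor_supermodular :
    ∃ (n : ℕ) (f : (Fin n → Bool) → Bool) (P : (Fin n → Bool) → ℝ),
      (∀ z, 0 ≤ P z) ∧ (∑ z, P z = 1) ∧
      ∃ x : Fin n → Bool, 0 < P x ∧
        (∃ (S S' : Finset (Fin n)) (i : Fin n), S ⊆ S' ∧ i ∉ S' ∧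
          vlCon f P x (insert i S) - vlCon f P x S <
            vlCon f P x (insert i S') - vlCon f P x S') ∧
        (∃ (S S' : Finset (Fin n)) (i : Fin n), S ⊆ S' ∧ i ∉ S' ∧
          vlCon f P x (insert i S') - vlCon f P x S' <
            vlCon f P x (insert i S) - vlCon f P x S) := by
  have v := vlCon_const_of_card exampleClassifier (c := 1 / 8) (by norm_num) (fun _ => false)
  refine ⟨3, exampleClassifier, fun _ => 1 / 8, fun _ => by norm_num, by simp, fun _ => false,
    by norm_num, ⟨∅, {1}, 0, empty_subset _, by decide, ?_⟩,
    ⟨∅, {2}, 0, empty_subset _, by decide, ?_⟩⟩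
  · rw [v ∅ (a := 0) (b := 1) (by decide) (by decide),
      v (insert 0 ∅) (a := 0) (b := 2) (by decide) (by decide),
      v {1} (a := 0) (b := 2) (by decide) (by decide),
      v (insert 0 {1}) (a := 1) (b := 4) (by decide) (by decide)]
    norm_num
  · rw [v ∅ (a := 0) (b := 1) (by decide) (by decide),
      v (insert 0 ∅) (a := 0) (b := 2) (by decide) (by decide),
      v {2} (a := 1) (b := 2) (by decide) (by decide),
      v (insert 0 {2}) (a := 1) (b := 4) (by decide) (by decide)]
    norm_num
end

section
/- Let f : F → C be a classifier on a finite product input space F = X_1 × ⋯ × X_n, let D̂ = (z¹, …, z^m) be a finite nonempty list of m points of F, and let D be the associated empirical distribution. Then for every S ⊆ {1,…,n}, either v^g_con(S) = 0 or v^g_con(S) ≥ 1/m². -/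
open Finset

open Classical in
/-- The empirical distribution of a dataset `d = (z¹, …, z^m)`:
`Pr(x) = (1/m) · #{j : z^j = x}`. -/
noncomputable def empiricalPMF {F : Type*} [Fintype F] {m : ℕ}
    (d : Fin m → F) : F → ℝ :=
  fun x => ((Finset.univ.filter (fun j => d j = x)).card : ℝ) / m

/-! Every positive mass of the empirical distribution is `k / m` with `k ≥ 1`, and every
nonzero conditional probability under it is a ratio `a / b` of counts with `1 ≤ a ≤ b ≤ m`.
Hence each nonzero summand `Pr(x) · Pr(f z ≠ f x | z_S̄ = x_S̄)` of `v^g_con(S)` is at least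
`1/m · 1/m`, and a sum of such summands is either `0` or at least one of them. -/

theorem one_div_le_div_of_le {a b m : ℕ} (ha : a ≠ 0) (hab : a ≤ b) (hbm : b ≤ m) :
    1 / (m : ℝ) ≤ a / b := by
  have hb : (0 : ℝ) < b := by exact_mod_cast (Nat.pos_of_ne_zero ha).trans_le hab
  calc 1 / (m : ℝ) ≤ 1 / b := one_div_le_one_div_of_le hb (mod_cast hbm)
    _ ≤ a / b := div_le_div_of_nonneg_right (mod_cast Nat.one_le_iff_ne_zero.mpr ha) hb.le

section Empirical

open Classical

variable {F : Type*} [Fintype F] {m : ℕ} (d : Fin m → F)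

theorem empiricalPMF_nonneg (x : F) : 0 ≤ empiricalPMF d x := by
  unfold empiricalPMF
  positivity

theorem one_div_le_empiricalPMF {x : F} (hx : 0 < empiricalPMF d x) :
    1 / (m : ℝ) ≤ empiricalPMF d x := by
  have hcard : #{j | d j = x} ≠ 0 := by
    rintro h
    simp [empiricalPMF, h] at hx
  exact div_le_div_of_nonneg_right (mod_cast Nat.one_le_iff_ne_zero.mpr hcard) m.cast_nonneg

theorem sum_empiricalPMF_mul (g : F → ℝ) :
    ∑ z, empiricalPMF d z * g z = (∑ j, g (d j)) / m := by
  have hfiber : ∑ j, g (d j) = ∑ z, (#{j | d j = z} : ℝ) * g z := by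
    rw [← Finset.sum_fiberwise Finset.univ d]
    refine Finset.sum_congr rfl fun z _ => ?_
    rw [Finset.sum_congr rfl fun j hj => by rw [(Finset.mem_filter.mp hj).2], Finset.sum_const,
      nsmul_eq_mul]
  rw [hfiber, Finset.sum_div]
  refine Finset.sum_congr rfl fun z _ => ?_
  rw [empiricalPMF, div_mul_eq_mul_div]

theorem sum_ite_empiricalPMF (Q : F → Prop) [DecidablePred Q] :
    ∑ z, (if Q z then empiricalPMF d z else 0) = (#{j | Q (d j)} : ℝ) / m := by
  simpa [← ite_zero_mul_ite_zero, Finset.sum_boole] using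
    sum_empiricalPMF_mul d fun z => if Q z then 1 else 0

theorem condPr_empiricalPMF (A B : F → Prop) :
    condPr (empiricalPMF d) A B = (#{j | A (d j) ∧ B (d j)} : ℝ) / #{j | B (d j)} := by
  rcases eq_or_ne m 0 with rfl | hm
  · simp [condPr, empiricalPMF]
  · simp only [condPr, sum_ite_empiricalPMF]
    exact div_div_div_cancel_right₀ (Nat.cast_ne_zero.mpr hm) _ _

theorem one_div_le_condPr_empiricalPMF {A B : F → Prop} (h : condPr (empiricalPMF d) A B ≠ 0) :
    1 / (m : ℝ) ≤ condPr (empiricalPMF d) A B := by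
  rw [condPr_empiricalPMF] at h ⊢
  have hnum : #{j | A (d j) ∧ B (d j)} ≠ 0 := by
    rintro hzero
    simp [hzero] at h
  have hnum_le : #{j | A (d j) ∧ B (d j)} ≤ #{j | B (d j)} :=
    Finset.card_le_card (Finset.monotone_filter_right _ fun _ _ hj => hj.2)
  have hden_le : #{j | B (d j)} ≤ m := (Finset.card_filter_le _ _).trans_eq (Finset.card_fin m)
  exact one_div_le_div_of_le hnum hnum_le hden_le

end Empirical

theorem Finset.sum_eq_zero_or_le_sum {ι M : Type*} [AddCommMonoid M] [PartialOrder M]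
    [IsOrderedAddMonoid M] {s : Finset ι} {f : ι → M} {ε : M} (hε : 0 ≤ ε)
    (hf : ∀ i ∈ s, f i = 0 ∨ ε ≤ f i) : ∑ i ∈ s, f i = 0 ∨ ε ≤ ∑ i ∈ s, f i := by
  have hf_nonneg : ∀ i ∈ s, 0 ≤ f i := fun i hi => (hf i hi).elim (·.ge) hε.trans
  by_cases hzero : ∀ i ∈ s, f i = 0
  · exact Or.inl (Finset.sum_eq_zero hzero)
  · push Not at hzero
    obtain ⟨i, hi, hfi⟩ := hzero
    exact Or.inr (((hf i hi).resolve_left hfi).trans (Finset.single_le_sum hf_nonneg hi))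

theorem vgCon_empirical_zero_or_ge_general {n : ℕ} {X : Fin n → Type*}
    [∀ i, Fintype (X i)]
    {C : Type*}
    (f : (∀ i, X i) → C) {m : ℕ} (d : Fin m → (∀ i, X i))
    (S : Finset (Fin n)) :
    vgCon f (empiricalPMF d) S = 0 ∨
      1 / (m : ℝ) ^ 2 ≤ vgCon f (empiricalPMF d) S := by
  refine Finset.sum_eq_zero_or_le_sum (by positivity) fun x hx => ?_
  set c := condPr (empiricalPMF d) (fun z => f z ≠ f x) (fun z => ∀ i ∈ Sᶜ, z i = x i)
  rcases eq_or_ne c 0 with hc | hc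
  · exact Or.inl (by rw [hc, mul_zero])
  · right
    calc 1 / (m : ℝ) ^ 2 = 1 / m * (1 / m) := by ring
      _ ≤ empiricalPMF d x * c :=
        mul_le_mul (one_div_le_empiricalPMF d (Finset.mem_filter.mp hx).2)
          (one_div_le_condPr_empiricalPMF d hc) (by positivity) (empiricalPMF_nonneg d x)

/-- for any classifier on a finite product input space and the
empirical distribution of a nonempty dataset of `m` points, every value of the
global contrastive value function is either `0` or at least `1/m²`. -/
theorem vgCon_empirical_zero_or_ge {n : ℕ} {X : Fin n → Type*}
    [∀ i, Fintype (X i)] [∀ i, Nonempty (X i)]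
    {C : Type*} [Fintype C] [Nonempty C]
    (f : (∀ i, X i) → C) {m : ℕ} (hm : 0 < m) (d : Fin m → (∀ i, X i))
    (S : Finset (Fin n)) :
    vgCon f (empiricalPMF d) S = 0 ∨
      1 / (m : ℝ) ^ 2 ≤ vgCon f (empiricalPMF d) S :=
  vgCon_empirical_zero_or_ge_general f d S
end
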